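/- arXiv:2604.08210 — 7 statements merged into one kernel-verified Lean document; each statement's English description precedes it below -/
import Mathlib

section
/- Let S be a ranked poset and M an acyclic matching on S. Fix x ∈ S of rank q that is M-critical, and z of rank q−1 that is matched upward by M, say (z, y') ∈ M. Then the map sending an M-path P from x to y' (which necessarily ends ... ⋗ z ↣ y') to the M-path obtained by deleting the final segment z ↣ y' is a bijection from the set of M-paths from x to y' onto the disjoint union over y ∈ ∇(z) \ {y'} of the sets of M-paths from x to y, where ∇(z) denotes the set of elements covering z. Consequently Σ_{y ∈ ∇(z)} ℓ_{(x,y)} = 0 in ℤ₂, where ℓ_{(x,y)} is the parity of the number of M-paths from x to y. -/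
open scoped Classical

universe u

variable {α : Type u}

/-- A rank function on a partial order, compatible with strict order and covering. -/
structure RankStruct (α : Type u) [PartialOrder α] where
  rk : α → ℕ
  strict_mono : ∀ x y : α, x < y → rk x < rk y
  rk_covBy : ∀ x y : α, x ⋖ y → rk y = rk x + 1

section Poset

variable [PartialOrder α]

/-- A matching on a ranked poset: a set of covering pairs, each element in at most one pair. -/
def IsMatching (M : Set (α × α)) : Prop :=
  (∀ p ∈ M, p.1 ⋖ p.2) ∧
    ∀ p ∈ M, ∀ q ∈ M, p ≠ q →
      p.1 ≠ q.1 ∧ p.1 ≠ q.2 ∧ p.2 ≠ q.1 ∧ p.2 ≠ q.2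

/-- `IsMPathSteps M y l z` : `l` is the list of matched pairs `(x_i, y_i)` of an
`M`-path `y ⋗ x₁ ↣ y₁ ⋗ ⋯ ⋗ x_r ↣ y_r = z`. -/
def IsMPathSteps (M : Set (α × α)) : α → List (α × α) → α → Prop
  | y, [], z => y = z
  | y, (x, y') :: rest, z => x ⋖ y ∧ (x, y') ∈ M ∧ y ≠ y' ∧ IsMPathSteps M y' rest z

/-- An acyclic matching: a matching with no non-trivial closed `M`-path. -/
def IsAcyclicMatching (M : Set (α × α)) : Prop :=
  IsMatching M ∧ ∀ (y : α) (l : List (α × α)), IsMPathSteps M y l y → l = []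

/-- An element is `M`-critical if it occurs in no pair of `M`. -/
def MCritical (M : Set (α × α)) (x : α) : Prop :=
  ∀ p ∈ M, p.1 ≠ x ∧ p.2 ≠ x

/-- Parity (in `ℤ₂`) of the number of `M`-paths from `a` to `b`. -/
noncomputable def ell (M : Set (α × α)) (a b : α) : ZMod 2 :=
  ({l : List (α × α) | IsMPathSteps M a l b}.ncard : ZMod 2)

/-- Combinatorially sphere-like ranked poset of rank `k`. -/
structure SphereLike (R : RankStruct α) (k : ℕ) : Prop where
  two_le : 2 ≤ k
  rk_le : ∀ x : α, R.rk x ≤ k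
  exists_top : ∃ x : α, R.rk x = k
  two_covers : ∀ x : α, R.rk x = k - 1 → {y : α | x ⋖ y}.ncard = 2
  even_mid : ∀ y z : α, R.rk y = k → R.rk z = k - 2 →
      Even {x : α | R.rk x = k - 1 ∧ z ⋖ x ∧ x ⋖ y}.ncard
  matching : ∃ M : Set (α × α), IsAcyclicMatching M ∧
      ∀ x : α, R.rk x = k - 1 → ¬ MCritical M x

/-- The `ℤ₂` boundary map on chains (functions `α → ℤ₂`). -/
noncomputable def bd [Fintype α] (c : α → ZMod 2) : α → ZMod 2 :=
  fun z => ∑ x : α, if z ⋖ x then c x else 0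

end Poset
set_option linter.unusedSectionVars false
set_option linter.unusedVariables false

section AuxLemmas
variable [PartialOrder α]

-- auxiliary lemmas

lemma mpath_append {M : Set (α × α)} {a b : α} {l₁ l₂ : List (α × α)} :
    IsMPathSteps M a (l₁ ++ l₂) b ↔ ∃ w, IsMPathSteps M a l₁ w ∧ IsMPathSteps M w l₂ b := by
  induction l₁ generalizing a with
  | nil =>
    simp only [List.nil_append]
    constructor
    · intro h; exact ⟨a, rfl, h⟩
    · rintro ⟨w, rfl, h⟩; exact h
  | cons p rest ih =>
    obtain ⟨u, v⟩ := p
    simp only [List.cons_append, IsMPathSteps]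
    constructor
    · rintro ⟨h1, h2, h3, h4⟩
      obtain ⟨w, hw1, hw2⟩ := ih.mp h4
      exact ⟨w, ⟨h1, h2, h3, hw1⟩, hw2⟩
    · rintro ⟨w, ⟨h1, h2, h3, h4⟩, hw2⟩
      exact ⟨h1, h2, h3, ih.mpr ⟨w, h4, hw2⟩⟩

lemma mpath_prefix {M : Set (α × α)} {a b c : α} {l : List (α × α)}
    (h : IsMPathSteps M a l b) (hc : c ∈ l.map Prod.snd) :
    ∃ r : List (α × α), r ≠ [] ∧ IsMPathSteps M a r c := by
  induction l generalizing a with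
  | nil => simp at hc
  | cons p rest ih =>
    obtain ⟨u, v⟩ := p
    obtain ⟨h1, h2, h3, h4⟩ := h
    simp only [List.map_cons, List.mem_cons] at hc
    rcases hc with rfl | hc
    · exact ⟨[(u, c)], by simp, h1, h2, h3, rfl⟩
    · obtain ⟨r, hr, hr2⟩ := ih h4 hc
      exact ⟨(u, v) :: r, by simp, h1, h2, h3, hr2⟩

lemma mpath_nodup {M : Set (α × α)} (hM : IsAcyclicMatching M) {a b : α} {l : List (α × α)}
    (h : IsMPathSteps M a l b) : (a :: l.map Prod.snd).Nodup := by
  induction l generalizing a with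
  | nil => simp
  | cons p rest ih =>
    obtain ⟨u, v⟩ := p
    obtain ⟨h1, h2, h3, h4⟩ := h
    have ihn := ih h4
    simp only [List.map_cons, List.nodup_cons] at ihn ⊢
    refine ⟨?_, ihn⟩
    simp only [List.mem_cons]
    rintro (rfl | ha)
    · exact h3 rfl
    · obtain ⟨r, hr, hr2⟩ := mpath_prefix h4 ha
      have : IsMPathSteps M a ((u, v) :: r) a := ⟨h1, h2, h3, hr2⟩
      exact hr (by simpa using hM.2 a _ this)

lemma mpath_finite [Fintype α] {M : Set (α × α)} (hM : IsAcyclicMatching M) (a b : α) :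
    {l : List (α × α) | IsMPathSteps M a l b}.Finite := by
  have hsub : {l : List (α × α) | IsMPathSteps M a l b} ⊆
      {l : List (α × α) | l.length ≤ Fintype.card α} := by
    intro l hl
    have hnd := mpath_nodup hM hl
    have hnd2 : (l.map Prod.snd).Nodup := (List.nodup_cons.mp hnd).2
    have hle := hnd2.length_le_card
    simpa using hle
  exact (List.finite_length_le (α × α) (Fintype.card α)).subset hsub


end AuxLemmas

section AuxLemmas2
variable [PartialOrder α]

def endpt : α → List (α × α) → α
  | a, [] => a
  | _, (_, v) :: rest => endpt v rest

lemma mpath_endpt {M : Set (α × α)} {a b : α} {l : List (α × α)}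
    (h : IsMPathSteps M a l b) : endpt a l = b := by
  induction l generalizing a with
  | nil => exact h
  | cons p rest ih => obtain ⟨u, v⟩ := p; exact ih h.2.2.2

lemma mpath_last {M : Set (α × α)} (hM : IsAcyclicMatching M) {x z y' : α}
    (hxcrit : MCritical M x) (hzy : (z, y') ∈ M) {l : List (α × α)}
    (h : IsMPathSteps M x l y') :
    IsMPathSteps M x l.dropLast (endpt x l.dropLast) ∧ z ⋖ endpt x l.dropLast ∧
      endpt x l.dropLast ≠ y' ∧ l = l.dropLast ++ [(z, y')] := by
  have hxy : x ≠ y' := fun hxy => (hxcrit (z, y') hzy).2 hxy.symm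
  have hne : l ≠ [] := fun h0 => hxy (by simpa [h0, IsMPathSteps] using h)
  have hdecomp : l = l.dropLast ++ [l.getLast hne] := (List.dropLast_append_getLast hne).symm
  obtain ⟨w, hw1, hw2⟩ := mpath_append.mp
    (show IsMPathSteps M x (l.dropLast ++ [l.getLast hne]) y' from hdecomp ▸ h)
  obtain ⟨⟨u, v⟩, hp⟩ : ∃ p : α × α, l.getLast hne = p := ⟨_, rfl⟩
  rw [hp] at hw2 hdecomp
  obtain ⟨hc, hm, hwv, hv⟩ : u ⋖ w ∧ (u, v) ∈ M ∧ w ≠ v ∧ v = y' := by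
    obtain ⟨h1, h2, h3, h4⟩ := hw2
    exact ⟨h1, h2, h3, h4⟩
  subst hv
  have huz : u = z := by
    by_contra hne'
    have : (u, v) ≠ (z, v) := by simpa [Prod.ext_iff] using hne'
    exact (hM.1.2 (u, v) hm (z, v) hzy this).2.2.2 rfl
  subst huz
  have hwend : endpt x l.dropLast = w := mpath_endpt hw1
  rw [hwend]
  exact ⟨hw1, hc, hwv, hdecomp⟩

end AuxLemmas2

section AuxLemmas3
variable [PartialOrder α]

lemma sigma_subtype_mk_eq {P : α → Prop} {Q : α → List (α × α) → Prop} {y₁ y₂ : α}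
    (h : y₁ = y₂) {l₁ l₂ : List (α × α)} (hl : l₁ = l₂)
    (p₁ : P y₁) (p₂ : Q y₁ l₁) (p₃ : P y₂) (p₄ : Q y₂ l₂) :
    (⟨⟨y₁, p₁⟩, ⟨l₁, p₂⟩⟩ : Σ y : Subtype P, {l : List (α × α) // Q y.1 l}) =
      ⟨⟨y₂, p₃⟩, ⟨l₂, p₄⟩⟩ := by subst h; subst hl; rfl

end AuxLemmas3

/-- deleting the final segment `z ↣ y'` is a bijection from the `M`-paths
from `x` to `y'` onto the union over `y ∈ ∇(z) \ {y'}` of the `M`-paths from `x` to `y`;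
consequently `∑_{y ∈ ∇(z)} ℓ_{(x,y)} = 0` in `ℤ₂`. -/
theorem stmt2 [PartialOrder α] [Fintype α] (R : RankStruct α) (M : Set (α × α))
    (hM : IsAcyclicMatching M) (q : ℕ) (x z y' : α)
    (hx : R.rk x = q) (hxcrit : MCritical M x)
    (hz : R.rk z = q - 1) (hzy : (z, y') ∈ M) :
    (∃ e : {l : List (α × α) // IsMPathSteps M x l y'} ≃
        Σ y : {y : α // z ⋖ y ∧ y ≠ y'}, {l : List (α × α) // IsMPathSteps M x l y.1},
      ∀ p, ((e p).2 : List (α × α)) = (p : List (α × α)).dropLast) ∧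
    ∑ y : α, (if z ⋖ y then ell M x y else 0) = 0 := by
  have key := fun (l : List (α × α)) (h : IsMPathSteps M x l y') =>
    mpath_last hM hxcrit hzy h
  have hE : ∃ e : {l : List (α × α) // IsMPathSteps M x l y'} ≃
      Σ y : {y : α // z ⋖ y ∧ y ≠ y'}, {l : List (α × α) // IsMPathSteps M x l y.1},
      ∀ p, ((e p).2 : List (α × α)) = (p : List (α × α)).dropLast := by
    refine ⟨⟨fun p => ⟨⟨endpt x p.1.dropLast, (key p.1 p.2).2.1, (key p.1 p.2).2.2.1⟩,
        ⟨p.1.dropLast, (key p.1 p.2).1⟩⟩,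
      fun s => ⟨s.2.1 ++ [(z, y')],
        mpath_append.mpr ⟨s.1.1, s.2.2, s.1.2.1, hzy, s.1.2.2, rfl⟩⟩,
      ?_, ?_⟩, fun p => rfl⟩
    · rintro ⟨l, hl⟩
      exact Subtype.ext (key l hl).2.2.2.symm
    · rintro ⟨⟨b, hb⟩, ⟨l, hl⟩⟩
      dsimp only
      have h1 : (l ++ [(z, y')]).dropLast = l := List.dropLast_concat
      refine sigma_subtype_mk_eq (P := fun y => z ⋖ y ∧ y ≠ y')
        (Q := fun a l => IsMPathSteps M x l a) ?_ h1 _ _ _ _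
      rw [h1]; exact mpath_endpt hl
  refine ⟨hE, ?_⟩
  obtain ⟨e, -⟩ := hE
  haveI hfin : ∀ b : α, Finite {l : List (α × α) // IsMPathSteps M x l b} :=
    fun b => (mpath_finite hM x b).to_subtype
  have hell : ∀ b : α,
      ell M x b = (Nat.card {l : List (α × α) // IsMPathSteps M x l b} : ZMod 2) := by
    intro b
    rw [ell, ← Nat.card_coe_set_eq]
    rfl
  haveI : ∀ b : {y : α // z ⋖ y ∧ y ≠ y'},
      Fintype {l : List (α × α) // IsMPathSteps M x l b.1} := fun b => Fintype.ofFinite _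
  have hcard : Nat.card {l : List (α × α) // IsMPathSteps M x l y'} =
      ∑ b : {y : α // z ⋖ y ∧ y ≠ y'},
        Nat.card {l : List (α × α) // IsMPathSteps M x l b.1} := by
    rw [Nat.card_congr e, Nat.card_eq_fintype_card, Fintype.card_sigma]
    exact Finset.sum_congr rfl fun b _ => (Nat.card_eq_fintype_card).symm
  have hzy' : z ⋖ y' := hM.1.1 (z, y') hzy
  have hstep : ell M x y' =
      ∑ b : {y : α // z ⋖ y ∧ y ≠ y'}, ell M x b.1 := by
    rw [hell y', hcard]
    push_cast
    exact Finset.sum_congr rfl fun b _ => (hell b.1).symm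
  have hsub : ∑ b : {y : α // z ⋖ y ∧ y ≠ y'}, ell M x b.1 =
      ∑ y ∈ (Finset.univ.filter (fun y => z ⋖ y)).erase y', ell M x y := by
    rw [Finset.sum_subtype (p := fun y => z ⋖ y ∧ y ≠ y')
      ((Finset.univ.filter (fun y => z ⋖ y)).erase y')
      (by intro y; simp [Finset.mem_erase, and_comm, ne_eq]) (ell M x)]
  calc ∑ y : α, (if z ⋖ y then ell M x y else 0)
      = ∑ y ∈ Finset.univ.filter (fun y => z ⋖ y), ell M x y := (Finset.sum_filter _ _).symm
    _ = ell M x y' + ∑ y ∈ (Finset.univ.filter (fun y => z ⋖ y)).erase y', ell M x y := by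
        rw [Finset.add_sum_erase _ _ (by simp [hzy'])]
    _ = 0 := by rw [← hsub, hstep, CharTwo.add_self_eq_zero]
end

section
/- Let S be a ranked poset of rank k and M an acyclic matching on S. Let D = {x_1, ..., x_n} be the set of elements of rank k−1 that are matched downward by M (i.e., (z_i, x_i) ∈ M for some z_i of rank k−2). If σ = Σ t_i x_i ∈ C_{k-1} (with t_i ∈ ℤ₂) satisfies d_{k-1}(σ) = 0, then σ = 0. Equivalently, the restriction of d_{k-1} to the span of D is injective. -/
open scoped Classical

universe u

variable {α : Type u}

/-- the boundary map is injective on chains supported on the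
downward-matched rank-`(k-1)` elements of an acyclic matching. -/
theorem stmt3 [PartialOrder α] [Fintype α] (R : RankStruct α) (M : Set (α × α))
    (hM : IsAcyclicMatching M) (k : ℕ) (hk : 2 ≤ k)
    (hle : ∀ x : α, R.rk x ≤ k) (htop : ∃ x : α, R.rk x = k)
    (σ : α → ZMod 2)
    (hσ : ∀ x, σ x ≠ 0 → R.rk x = k - 1 ∧ ∃ z, (z, x) ∈ M)
    (h0 : bd σ = 0) : σ = 0 := by
  by_contra hne
  have hex : ∃ y0, σ y0 ≠ 0 := by
    by_contra h; push_neg at h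
    exact hne (funext fun x => h x)
  obtain ⟨y0, hy0⟩ := hex
  -- step lemma: every support element has a "predecessor" one M-path-step above
  have step : ∀ y, σ y ≠ 0 → ∃ y', σ y' ≠ 0 ∧ ∃ z, z ⋖ y' ∧ (z, y) ∈ M ∧ y' ≠ y := by
    intro y hy
    obtain ⟨-, z, hzM⟩ := hσ y hy
    have hzy : z ⋖ y := hM.1.1 (z, y) hzM
    have hb : ∑ x : α, (if z ⋖ x then σ x else 0) = 0 := congrFun h0 z
    by_contra hcon
    push_neg at hcon
    have hsum : ∑ x : α, (if z ⋖ x then σ x else 0) = σ y := by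
      rw [Finset.sum_eq_single y]
      · simp [hzy]
      · intro b _ hby
        by_cases hzb : z ⋖ b
        · by_cases hb0 : σ b = 0
          · simp [hb0]
          · exact absurd (hcon b hb0 z hzb hzM) hby
        · simp [hzb]
      · intro h; exact absurd (Finset.mem_univ y) h
    exact hy (hsum ▸ hb)
  have step' : ∀ y, ∃ y', σ y ≠ 0 →
      σ y' ≠ 0 ∧ ∃ z, z ⋖ y' ∧ (z, y) ∈ M ∧ y' ≠ y := by
    intro y
    by_cases h : σ y ≠ 0
    · obtain ⟨y', hy'⟩ := step y h; exact ⟨y', fun _ => hy'⟩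
    · exact ⟨y, fun h' => absurd h' h⟩
  choose g hg using step'
  -- iterates stay in the support
  have hiter : ∀ n (y : α), σ y ≠ 0 → σ (g^[n] y) ≠ 0 := by
    intro n
    induction n with
    | zero => intro y hy; simpa using hy
    | succ n ih =>
      intro y hy
      rw [Function.iterate_succ_apply']
      exact (hg _ (ih y hy)).1
  -- build M-paths from g^[n] y down to y
  have path : ∀ n (y : α), σ y ≠ 0 →
      ∃ l : List (α × α), l.length = n ∧ IsMPathSteps M (g^[n] y) l y := by
    intro n
    induction n with
    | zero =>
      intro y hy
      exact ⟨[], rfl, rfl⟩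
    | succ n ih =>
      intro y hy
      obtain ⟨l, hlen, hl⟩ := ih y hy
      set y1 := g^[n] y with hy1
      have hy1ne : σ y1 ≠ 0 := hiter n y hy
      obtain ⟨-, z, hz1, hz2, hz3⟩ := hg y1 hy1ne
      refine ⟨(z, y1) :: l, by simp [hlen], ?_⟩
      rw [Function.iterate_succ_apply']
      exact ⟨hz1, hz2, hz3, hl⟩
  -- pigeonhole on iterates
  obtain ⟨i, j, hij, hfij⟩ :=
    Finite.exists_ne_map_eq_of_infinite (fun n => g^[n] y0)
  wlog hlt : i < j generalizing i j
  · exact this j i hij.symm hfij.symm (by omega)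
  have hfix : g^[j - i] (g^[i] y0) = g^[i] y0 := by
    have := Function.iterate_add_apply g (j - i) i y0
    have hji : j - i + i = j := by omega
    rw [hji] at this
    rw [← this, ← hfij]
  obtain ⟨l, hlen, hl⟩ := path (j - i) (g^[i] y0) (hiter i y0 hy0)
  rw [hfix] at hl
  have := hM.2 _ l hl
  rw [this] at hlen
  simp at hlen
  omega
end

section
/- Let S be a sphere-like ranked poset of rank k. Then for every η ∈ C_{k-1} with d_{k-1}(η) = 0, there exists ξ ∈ C_k with d_k(ξ) = η. That is, every ℤ₂ (k−1)-cycle of S is a boundary (the (k−1)-st ℤ₂ homology of the associated chain complex vanishes in the sense that ker d_{k-1} ∩ C_{k-1} ⊆ im d_k). -/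
open scoped Classical

universe u

variable {α : Type u}

/-!
Every element of rank `k - 1` is matched, up or down. While the cycle `η` has an element `x₀`
of its support matched up to `y₀`, replace `η` by `η + ∂y₀`. This is again a `(k - 1)`-cycle,
since `∂∂y₀ = 0` is exactly the parity condition on the intervals below `y₀`; it no longer
contains `x₀`; and each new up-matched element `x ⋖ y₀` has its partner one `M`-step after `y₀`.
Acyclicity lets us number the elements by an injective `g` decreasing along `M`-steps, so the
weight `∑ 2 ^ g y` over the up-partners `y` of the support drops and the process stops; the
`y₀`'s used sum to `ξ`. When every element of the support is matched down, an element that is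
minimal for `M`-steps is the only element of the support covering its partner `z`, so
`∂η z ≠ 0` unless `η = 0`.
-/

open Finset Relation

theorem exists_injective_nat_lt_of_irrefl_transGen {β : Type*} [Fintype β]
    {r : β → β → Prop} (hr : ∀ a, ¬ TransGen r a a) :
    ∃ g : β → ℕ, Function.Injective g ∧ ∀ ⦃a b⦄, r a b → g b < g a := by
  let s : β → ℕ := fun a ↦ #{c | TransGen r a c}
  have hs : ∀ ⦃a b⦄, r a b → s b < s a := fun a b hab ↦ by
    refine card_lt_card ⟨fun c hc ↦ ?_, fun hsub ↦ hr b ?_⟩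
    · simp only [mem_filter, mem_univ, true_and] at hc ⊢
      exact TransGen.head hab hc
    · simpa using hsub (by simpa using TransGen.single hab)
  -- `s` is strictly decreasing; an enumeration of `β` breaks its ties
  let e := Fintype.equivFin β
  refine ⟨fun a ↦ Fintype.card β * s a + e a, fun a b hab ↦ e.injective (Fin.ext ?_),
    fun a b hab ↦ ?_⟩
  · simpa [Nat.mul_add_mod, Nat.mod_eq_of_lt (e _).isLt] using congrArg (· % Fintype.card β) hab
  · dsimp only
    have := (e b).isLt
    have := Nat.mul_le_mul_left (Fintype.card β) (hs hab)
    rw [Nat.mul_succ] at this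
    omega

theorem sum_two_pow_lt_of_subset_erase_union {β : Type*} [DecidableEq β] {g : β → ℕ}
    (hg : Function.Injective g) {s s' t : Finset β} {y : β} (hy : y ∈ s)
    (hsub : s' ⊆ s.erase y ∪ t) (ht : ∀ b ∈ t, g b < g y) :
    ∑ b ∈ s', 2 ^ g b < ∑ b ∈ s, 2 ^ g b := by
  have ht' : ∑ b ∈ t, 2 ^ g b < 2 ^ g y := by
    rw [← sum_image fun a _ b _ h ↦ hg h]
    exact Nat.geomSum_lt le_rfl (by simpa using ht)
  calc ∑ b ∈ s', 2 ^ g b ≤ ∑ b ∈ s.erase y ∪ t, 2 ^ g b := sum_le_sum_of_subset hsub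
    _ ≤ ∑ b ∈ s.erase y, 2 ^ g b + ∑ b ∈ t, 2 ^ g b := by rw [← sum_union_inter]; omega
    _ < ∑ b ∈ s.erase y, 2 ^ g b + 2 ^ g y := by omega
    _ = ∑ b ∈ s, 2 ^ g b := sum_erase_add _ _ hy

theorem exists_mem_of_not_mCritical {M : Set (α × α)} {x : α} (h : ¬ MCritical M x) :
    (∃ y, (x, y) ∈ M) ∨ ∃ z, (z, x) ∈ M := by
  simp only [MCritical, not_forall, not_and_or, not_not] at h
  obtain ⟨⟨a, b⟩, hm, rfl | rfl⟩ := h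
  exacts [.inl ⟨b, hm⟩, .inr ⟨a, hm⟩]

theorem IsMPathSteps.append [PartialOrder α] {M : Set (α × α)} :
    ∀ {l l' : List (α × α)} {a b c : α},
      IsMPathSteps M a l b → IsMPathSteps M b l' c → IsMPathSteps M a (l ++ l') c
  | [], _, _, _, _, rfl, h => h
  | (_, _) :: _, _, _, _, _, ⟨hc, hm, hne, h⟩, h' => ⟨hc, hm, hne, h.append h'⟩

section Matching

variable [PartialOrder α] {M : Set (α × α)}

def MStep (M : Set (α × α)) (y b : α) : Prop :=
  ∃ x, x ⋖ y ∧ (x, b) ∈ M ∧ y ≠ b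

theorem exists_isMPathSteps_of_transGen {y z : α} (h : TransGen (MStep M) y z) :
    ∃ l, l ≠ [] ∧ IsMPathSteps M y l z := by
  induction h with
  | single h =>
    obtain ⟨x, hc, hm, hne⟩ := h
    exact ⟨[(x, _)], List.cons_ne_nil _ _, hc, hm, hne, rfl⟩
  | tail _ h ih =>
    obtain ⟨x, hc, hm, hne⟩ := h
    obtain ⟨l, -, hl⟩ := ih
    exact ⟨l ++ [(x, _)], by simp, hl.append ⟨hc, hm, hne, rfl⟩⟩

theorem IsAcyclicMatching.not_transGen_mStep (hA : IsAcyclicMatching M) (y : α) :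
    ¬ TransGen (MStep M) y y := fun h ↦
  let ⟨l, hl, hp⟩ := exists_isMPathSteps_of_transGen h
  hl (hA.2 y l hp)

theorem IsAcyclicMatching.wellFounded_transGen_mStep [Finite α] (hA : IsAcyclicMatching M) :
    WellFounded (TransGen (MStep M)) :=
  haveI : Std.Irrefl (TransGen (MStep M)) := ⟨hA.not_transGen_mStep⟩
  Finite.wellFounded_of_trans_of_irrefl _

theorem IsMatching.fst_eq_of_mem (hM : IsMatching M) {x x' y : α} (h : (x, y) ∈ M)
    (h' : (x', y) ∈ M) : x = x' := by
  by_contra hne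
  exact (hM.2 _ h _ h' fun he ↦ hne (congrArg Prod.fst he)).2.2.2 rfl

end Matching

section Chains

variable [PartialOrder α] {R : RankStruct α}

def IsChainOfRank (R : RankStruct α) (q : ℕ) (c : α → ZMod 2) : Prop :=
  ∀ x, c x ≠ 0 → R.rk x = q

theorem IsChainOfRank.add {q : ℕ} {c c' : α → ZMod 2} (hc : IsChainOfRank R q c)
    (hc' : IsChainOfRank R q c') : IsChainOfRank R q (c + c') := fun x hx ↦ by
  by_cases h : c x = 0
  · exact hc' x (by simpa [h] using hx)
  · exact hc x h

theorem isChainOfRank_single {q : ℕ} {y : α} (hy : R.rk y = q) :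
    IsChainOfRank R q (Pi.single y 1) := fun x hx ↦ by
  by_cases h : x = y
  · rwa [h]
  · simp [h] at hx

variable [Fintype α]

theorem bd_add (c c' : α → ZMod 2) : bd (c + c') = bd c + bd c' := by
  funext z
  simp only [bd, Pi.add_apply, ← sum_add_distrib]
  exact sum_congr rfl fun x _ ↦ by split_ifs <;> simp

theorem bd_zero : bd (0 : α → ZMod 2) = 0 := by
  funext z
  simp [bd]

theorem bd_single (y z : α) : bd (Pi.single y 1) z = if z ⋖ y then 1 else 0 := by
  rw [bd, sum_eq_single y (fun x _ hx ↦ by simp [hx]) (by simp)]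
  simp

theorem IsChainOfRank.bd {q : ℕ} {c : α → ZMod 2} (hc : IsChainOfRank R q c) :
    IsChainOfRank R (q - 1) (bd c) := fun z hz ↦ by
  obtain ⟨x, -, hx⟩ := exists_ne_zero_of_sum_ne_zero hz
  split_ifs at hx with hzx
  · have := R.rk_covBy _ _ hzx
    have := hc x hx
    omega
  · exact absurd rfl hx

theorem SphereLike.bd_bd_single {k : ℕ} (hS : SphereLike R k) {y : α} (hy : R.rk y = k) :
    bd (bd (Pi.single y (1 : ZMod 2))) = 0 := by
  funext z
  have hcount : bd (bd (Pi.single y (1 : ZMod 2))) z = #{x | z ⋖ x ∧ x ⋖ y} := by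
    rw [bd]
    simp only [bd_single, ← ite_and]
    rw [sum_boole]
  rw [hcount, Pi.zero_apply, ZMod.natCast_eq_zero_iff_even]
  by_cases hz : R.rk z = k - 2
  · convert hS.even_mid y z hy hz using 1
    rw [Set.ncard_eq_toFinset_card']
    congr 1
    ext x
    simp only [mem_filter, mem_univ, true_and, Set.mem_toFinset, Set.mem_ofPred_eq]
    refine ⟨fun h ↦ ⟨?_, h⟩, fun h ↦ h.2⟩
    have := R.rk_covBy _ _ h.2
    omega
  · rw [filter_eq_empty_iff.2 fun x _ h ↦ hz ?_, card_empty]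
    · exact Even.zero
    have := R.rk_covBy _ _ h.1
    have := R.rk_covBy _ _ h.2
    omega

end Chains

section Reduction

variable [PartialOrder α] [Fintype α] {M : Set (α × α)}

noncomputable def upPartners (M : Set (α × α)) (η : α → ZMod 2) : Finset α :=
  {y | ∃ x, (x, y) ∈ M ∧ η x ≠ 0}

theorem IsAcyclicMatching.eq_zero_of_upPartners_eq_empty (hA : IsAcyclicMatching M)
    {η : α → ZMod 2} (h0 : bd η = 0) (hη : ∀ x, η x ≠ 0 → ¬ MCritical M x)
    (hP : upPartners M η = ∅) : η = 0 := by
  have hdown : ∀ x, η x ≠ 0 → ∃ z, (z, x) ∈ M := fun x hx ↦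
    (exists_mem_of_not_mCritical (hη x hx)).resolve_left fun ⟨y, hy⟩ ↦
      eq_empty_iff_forall_notMem.1 hP y (by simpa [upPartners] using ⟨x, hy, hx⟩)
  by_contra hne
  obtain ⟨x, hx, hmin⟩ :=
    hA.wellFounded_transGen_mStep.has_min {x | η x ≠ 0} (Function.ne_iff.1 hne)
  obtain ⟨z, hzx⟩ := hdown x hx
  -- any other `x' ⋗ z` in the support would be an `M`-step `x' → x`
  have hsum : bd η z = η x := by
    refine (sum_eq_single x (fun x' _ hx' ↦ ?_) (by simp)).trans (if_pos (hA.1.1 _ hzx))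
    split_ifs with hzx'
    · by_contra h
      exact hmin x' h (TransGen.single ⟨z, hzx', hzx, hx'⟩)
    · rfl
  exact hx (hsum.symm.trans (congrFun h0 z))

theorem upPartners_add_bd_single_subset (hM : IsMatching M) {η : α → ZMod 2} {x₀ y₀ : α}
    (hm : (x₀, y₀) ∈ M) (hη : η x₀ ≠ 0) :
    upPartners M (η + bd (Pi.single y₀ 1)) ⊆
      (upPartners M η).erase y₀ ∪ ({y | MStep M y₀ y} : Finset α) := by
  intro y hy
  obtain ⟨x, hxy, hx⟩ : ∃ x, (x, y) ∈ M ∧ (η + bd (Pi.single y₀ 1)) x ≠ 0 := by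
    simpa [upPartners] using hy
  simp only [mem_union, mem_erase, upPartners, mem_filter, mem_univ, true_and]
  by_cases hyy : y = y₀
  · subst hyy
    obtain rfl := hM.fst_eq_of_mem hxy hm
    rw [Pi.add_apply, bd_single, if_pos (hM.1 _ hm), Fin.eq_one_of_ne_zero _ hη] at hx
    exact absurd rfl hx
  by_cases hxy₀ : x ⋖ y₀
  · exact .inr ⟨x, hxy₀, hxy, Ne.symm hyy⟩
  · exact .inl ⟨hyy, x, hxy, by simpa [bd_single, hxy₀] using hx⟩

theorem sum_upPartners_add_bd_single_lt (hM : IsMatching M) {g : α → ℕ}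
    (hg : Function.Injective g) (hgM : ∀ ⦃a b⦄, MStep M a b → g b < g a)
    {η : α → ZMod 2} {x₀ y₀ : α} (hm : (x₀, y₀) ∈ M) (hη : η x₀ ≠ 0) :
    ∑ y ∈ upPartners M (η + bd (Pi.single y₀ 1)), 2 ^ g y < ∑ y ∈ upPartners M η, 2 ^ g y :=
  sum_two_pow_lt_of_subset_erase_union hg (by simpa [upPartners] using ⟨x₀, hm, hη⟩)
    (upPartners_add_bd_single_subset hM hm hη) (by simpa using fun y h ↦ hgM h)

end Reduction

/-- in a sphere-like ranked poset of rank `k`, every `ℤ₂` `(k-1)`-cycle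
is a boundary. -/
theorem stmt4 [PartialOrder α] [Fintype α] (R : RankStruct α) (k : ℕ)
    (hS : SphereLike R k) (η : α → ZMod 2)
    (hη : ∀ x, η x ≠ 0 → R.rk x = k - 1) (h0 : bd η = 0) :
    ∃ ξ : α → ZMod 2, (∀ x, ξ x ≠ 0 → R.rk x = k) ∧ bd ξ = η := by
  obtain ⟨M, hA, hnc⟩ := hS.matching
  obtain ⟨g, hg, hgM⟩ := exists_injective_nat_lt_of_irrefl_transGen hA.not_transGen_mStep
  induction hw : ∑ y ∈ upPartners M η, 2 ^ g y using Nat.strong_induction_on generalizing η with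
  | _ n ih =>
  obtain ⟨y₀, hy₀⟩ | hP := (upPartners M η).eq_empty_or_nonempty.symm
  · obtain ⟨x₀, hm, hx₀⟩ : ∃ x, (x, y₀) ∈ M ∧ η x ≠ 0 := by simpa [upPartners] using hy₀
    have hy₀k : R.rk y₀ = k := by
      have := R.rk_covBy x₀ y₀ (hA.1.1 _ hm)
      have := hη x₀ hx₀
      have := hS.two_le
      omega
    have hδ := isChainOfRank_single (R := R) hy₀k
    obtain ⟨ξ, hξ, hbd⟩ := ih _ (hw ▸ sum_upPartners_add_bd_single_lt hA.1 hg hgM hm hx₀)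
      (η + bd (Pi.single y₀ 1)) (IsChainOfRank.add hη hδ.bd)
      (by rw [bd_add, h0, hS.bd_bd_single hy₀k, add_zero]) rfl
    refine ⟨ξ + Pi.single y₀ 1, IsChainOfRank.add hξ hδ, ?_⟩
    rw [bd_add, hbd, add_assoc, ← bd_add, ← Pi.single_add, CharTwo.add_self_eq_zero,
      Pi.single_zero, bd_zero, add_zero]
  · refine ⟨0, fun x hx ↦ absurd rfl hx, ?_⟩
    rw [bd_zero, hA.eq_zero_of_upPartners_eq_empty h0 (fun x hx ↦ hnc x (hη x hx)) hP]
end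

section
/- Let S be a sphere-like ranked poset of rank k, and suppose every element of rank k−2 is covered by an even number of elements. Then the maximum-ranked elements of S admit a proper 2-colouring: there is a function ψ : S_k → ℤ₂ such that whenever two distinct elements y_1, y_2 of rank k cover a common element (i.e., Δ(y_1) ∩ Δ(y_2) ≠ ∅), we have ψ(y_1) ≠ ψ(y_2). -/
open scoped Classical

universe u

variable {α : Type u}

section StmtFiveAux

open Finset Module

variable [PartialOrder α]

private lemma even_cast_zero {n : ℕ} (h : Even n) : (n : ZMod 2) = 0 := by
  obtain ⟨m, rfl⟩ := h
  push_cast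
  exact CharTwo.add_self_eq_zero _

private lemma chain_path (M : Set (α × α)) {T : Type*} (p : T → α × α)
    (hpM : ∀ t, p t ∈ M) (g : ℕ → T)
    (hstep : ∀ n, (p (g n)).1 ⋖ (p (g (n + 1))).2 ∧ (p (g (n + 1))).2 ≠ (p (g n)).2) :
    ∀ n a : ℕ, ∃ l : List (α × α), l.length = n ∧
      IsMPathSteps M (p (g (a + n))).2 l (p (g a)).2 := by
  intro n
  induction n with
  | zero => exact fun a => ⟨[], rfl, rfl⟩
  | succ n ih =>
    intro a
    obtain ⟨l, hl, hpath⟩ := ih a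
    refine ⟨((p (g (a + n))).1, (p (g (a + n))).2) :: l, by simp [hl], ?_⟩
    rw [show a + (n + 1) = (a + n) + 1 from rfl]
    exact ⟨(hstep (a + n)).1, hpM (g (a + n)), (hstep (a + n)).2, hpath⟩

private lemma exists_sink {M : Set (α × α)} (hM : IsAcyclicMatching M) {T : Type*}
    (p : T → α × α) (hpM : ∀ t, p t ∈ M) (hpinj : Function.Injective p)
    (s : Finset T) (hs : s.Nonempty) :
    ∃ t ∈ s, ∀ t' ∈ s, t' ≠ t → ¬ (p t).1 ⋖ (p t').2 := by
  by_contra hcon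
  push_neg at hcon
  have hchoice : ∀ t : {x // x ∈ s}, ∃ t' : {x // x ∈ s},
      (t' : T) ≠ (t : T) ∧ (p (t : T)).1 ⋖ (p (t' : T)).2 := by
    rintro ⟨t, ht⟩
    obtain ⟨t', ht', hne, hcov⟩ := hcon t ht
    exact ⟨⟨t', ht'⟩, hne, hcov⟩
  choose f hf1 hf2 using hchoice
  obtain ⟨t₀, ht₀⟩ := hs
  set g : ℕ → {x // x ∈ s} := fun n => f^[n] ⟨t₀, ht₀⟩ with hgdef
  have hgsucc : ∀ n, g (n + 1) = f (g n) := fun n => Function.iterate_succ_apply' f n _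
  have hstep : ∀ n, ((p ∘ Subtype.val) (g n)).1 ⋖ ((p ∘ Subtype.val) (g (n + 1))).2 ∧
      ((p ∘ Subtype.val) (g (n + 1))).2 ≠ ((p ∘ Subtype.val) (g n)).2 := by
    intro n
    refine ⟨?_, ?_⟩
    · show (p (g n : T)).1 ⋖ (p (g (n+1) : T)).2
      rw [hgsucc n]; exact hf2 (g n)
    · have hne : (g (n + 1) : T) ≠ (g n : T) := by rw [hgsucc n]; exact hf1 (g n)
      have hpq : p (g (n + 1) : T) ≠ p (g n : T) := fun h => hne (hpinj h)
      exact (hM.1.2 _ (hpM _) _ (hpM _) hpq).2.2.2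
  have key : ∀ a b : ℕ, a < b → g a = g b → False := by
    intro a b hab heq
    obtain ⟨l, hl, hpath⟩ :=
      chain_path M (p ∘ Subtype.val) (fun t => hpM _) g hstep (b - a) a
    rw [show a + (b - a) = b by omega, ← heq] at hpath
    have hnil := hM.2 _ _ hpath
    rw [hnil] at hl
    simp only [List.length_nil] at hl
    omega
  obtain ⟨i, j, hij, hgij⟩ := Finite.exists_ne_map_eq_of_infinite g
  rcases lt_trichotomy i j with h | h | h
  · exact key i j h hgij
  · exact hij h
  · exact key j i h hgij.symm

private noncomputable def kmap {I J : Type u} [Fintype J] (q : I → J → Prop) :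
    (J → ZMod 2) →ₗ[ZMod 2] (I → ZMod 2) where
  toFun c i := ∑ j, if q i j then c j else 0
  map_add' c d := by
    funext i
    rw [Pi.add_apply, ← Finset.sum_add_distrib]
    exact Finset.sum_congr rfl fun j _ => by by_cases h : q i j <;> simp [h]
  map_smul' r c := by
    funext i
    simp only [RingHom.id_apply, Pi.smul_apply, smul_eq_mul, Finset.mul_sum]
    exact Finset.sum_congr rfl fun j _ => by by_cases h : q i j <;> simp [h]

private lemma kmap_apply {I J : Type u} [Fintype J] (q : I → J → Prop)
    (c : J → ZMod 2) (i : I) :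
    kmap q c i = ∑ j, if q i j then c j else 0 := rfl

private lemma sum_ite_point {J : Type u} [Fintype J] (P : J → Prop) (b : J) (a : ZMod 2) :
    (∑ j, if P j then (if j = b then a else 0) else 0) = if P b then a else 0 := by
  rw [Finset.sum_eq_single b]
  · simp
  · intro j _ hj; simp [hj]
  · intro hb; exact absurd (Finset.mem_univ _) hb

private lemma kmap_comp_ind {I J T : Type u} [Fintype J] [Fintype T]
    (q : I → J → Prop) (h : T → J) (c : T → ZMod 2) (i : I) :
    kmap q (kmap (fun (j : J) (t : T) => j = h t) c) i
      = ∑ t, if q i (h t) then c t else 0 := by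
  rw [kmap_apply]
  have hdist : ∀ j : J, (if q i j then (kmap (fun (j : J) (t : T) => j = h t) c j) else 0)
      = ∑ t, if q i j then (if j = h t then c t else 0) else 0 := by
    intro j
    rw [kmap_apply]
    split <;> simp
  rw [Finset.sum_congr rfl fun j _ => hdist j, Finset.sum_comm]
  exact Finset.sum_congr rfl fun t _ => sum_ite_point _ _ _

private lemma kmap_eval_point {I J : Type u} [Fintype J] (ρ : I → J)
    (w : J → ZMod 2) (i : I) :
    kmap (fun (i : I) (j : J) => j = ρ i) w i = w (ρ i) := by
  rw [kmap_apply, Finset.sum_ite_eq' Finset.univ (ρ i) w, if_pos (Finset.mem_univ _)]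

private lemma kmap_pair_injective {M : Set (α × α)} (hM : IsAcyclicMatching M)
    {T : Type u} [Fintype T] (p : T → α × α) (hpM : ∀ t, p t ∈ M)
    (hpinj : Function.Injective p) :
    Function.Injective (kmap fun t t' : T => (p t).1 ⋖ (p t').2) := by
  rw [← LinearMap.ker_eq_bot, LinearMap.ker_eq_bot']
  intro c hc
  by_contra hcne
  obtain ⟨t₀, ht₀⟩ := Function.ne_iff.mp hcne
  have ht₀' : c t₀ ≠ 0 := ht₀
  set s : Finset T := Finset.univ.filter (fun t => c t ≠ 0) with hsdef
  have hs : s.Nonempty := ⟨t₀, Finset.mem_filter.mpr ⟨Finset.mem_univ _, ht₀'⟩⟩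
  obtain ⟨t, ht, hmin⟩ := exists_sink hM p hpM hpinj s hs
  have h0 : (∑ t', if (p t).1 ⋖ (p t').2 then c t' else 0) = 0 :=
    (kmap_apply _ c t).symm.trans (congrFun hc t)
  rw [Finset.sum_eq_single t (fun b _ hb => ?_) (fun hb => absurd (Finset.mem_univ _) hb)] at h0
  · rw [if_pos (hM.1.1 _ (hpM t))] at h0
    exact (Finset.mem_filter.mp ht).2 h0
  · by_cases hcb : c b = 0
    · simp [hcb]
    · have hbmem : b ∈ s := Finset.mem_filter.mpr ⟨Finset.mem_univ _, hcb⟩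
      simp [hmin b hbmem hb]

end StmtFiveAux

/-- main theorem: a sphere-like ranked poset of rank `k` in which every
rank-`(k-2)` element is covered by an even number of elements admits a proper
`2`-colouring of its maximum ranked elements. -/
theorem stmt5 [PartialOrder α] [Fintype α] (R : RankStruct α) (k : ℕ)
    (hS : SphereLike R k)
    (hev : ∀ z : α, R.rk z = k - 2 → Even {y : α | z ⋖ y}.ncard) :
    ∃ ψ : α → ZMod 2, ∀ y₁ y₂ : α, R.rk y₁ = k → R.rk y₂ = k → y₁ ≠ y₂ →
      (∃ z, z ⋖ y₁ ∧ z ⋖ y₂) → ψ y₁ ≠ ψ y₂ := by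
  classical
  obtain ⟨M, hMac, hMnc⟩ := hS.matching
  have hk2 := hS.two_le
  set Mid := {x : α // R.rk x = k - 1} with hMidDef
  set Bot := {z : α // R.rk z = k - 2} with hBotDef
  set B : (α → ZMod 2) →ₗ[ZMod 2] (Mid → ZMod 2) :=
    kmap (fun (x : Mid) (y : α) => (x : α) ⋖ y) with hBdef
  set E : (Mid → ZMod 2) →ₗ[ZMod 2] (Bot → ZMod 2) :=
    kmap (fun (z : Bot) (x : Mid) => (z : α) ⋖ (x : α)) with hEdef
  set Up : Mid → Prop := fun x => ∃ p ∈ M, p.1 = (x : α) with hUpDef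
  -- choose the matching pairs
  have hUex : ∀ u : {x : Mid // Up x}, ∃ p, p ∈ M ∧ p.1 = ((u : Mid) : α) := by
    rintro ⟨x, p, hpM, hp1⟩
    exact ⟨p, hpM, hp1⟩
  choose pU hpUM hpU1 using hUex
  have hDex : ∀ d : {x : Mid // ¬ Up x}, ∃ p, p ∈ M ∧ p.2 = ((d : Mid) : α) := by
    rintro ⟨x, hx⟩
    have hnc := hMnc (x : α) x.2
    rw [MCritical] at hnc
    push_neg at hnc
    obtain ⟨p, hpM, hp⟩ := hnc
    by_cases h1 : p.1 = (x : α)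
    · exact absurd ⟨p, hpM, h1⟩ hx
    · exact ⟨p, hpM, hp h1⟩
  choose pD hpDM hpD2 using hDex
  have pUinj : Function.Injective pU := by
    intro u u' h
    have : ((u : Mid) : α) = ((u' : Mid) : α) := by rw [← hpU1 u, ← hpU1 u', h]
    exact Subtype.ext (Subtype.ext this)
  have pDinj : Function.Injective pD := by
    intro d d' h
    have : ((d : Mid) : α) = ((d' : Mid) : α) := by rw [← hpD2 d, ← hpD2 d', h]
    exact Subtype.ext (Subtype.ext this)
  have hμrk : ∀ d : {x : Mid // ¬ Up x}, R.rk (pD d).1 = k - 2 := by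
    intro d
    have hcov : (pD d).1 ⋖ (pD d).2 := hMac.1.1 _ (hpDM d)
    have h1 := R.rk_covBy _ _ hcov
    rw [hpD2 d] at h1
    have hd : R.rk ((d : Mid) : α) = k - 1 := (d : Mid).2
    omega
  set μ : {x : Mid // ¬ Up x} → Bot := fun d => ⟨(pD d).1, hμrk d⟩ with hμdef
  -- rank of range B is at least card U
  have hU_le : Fintype.card {x : Mid // Up x}
      ≤ Module.finrank (ZMod 2) (LinearMap.range B) := by
    set ιU : ({x : Mid // Up x} → ZMod 2) →ₗ[ZMod 2] (α → ZMod 2) :=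
      kmap (fun (y : α) (u : {x : Mid // Up x}) => y = (pU u).2) with hιUdef
    set πU : (Mid → ZMod 2) →ₗ[ZMod 2] ({x : Mid // Up x} → ZMod 2) :=
      kmap (fun (u : {x : Mid // Up x}) (x : Mid) => x = (u : Mid)) with hπUdef
    have hLU := kmap_pair_injective hMac pU hpUM pUinj
    have hcomp : ∀ (c : {x : Mid // Up x} → ZMod 2) u,
        πU (B (ιU c)) u = kmap (fun t t' : {x : Mid // Up x} =>
          (pU t).1 ⋖ (pU t').2) c u := by
      intro c u
      rw [hπUdef, kmap_eval_point (fun u : {x : Mid // Up x} => (u : Mid)), hBdef, hιUdef,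
        kmap_comp_ind (fun (x : Mid) (y : α) => (x : α) ⋖ y)
          (fun u' : {x : Mid // Up x} => (pU u').2) c ((u : Mid)),
        kmap_apply]
      exact Finset.sum_congr rfl fun t _ => by rw [hpU1 u]
    have hinj : Function.Injective (B ∘ₗ ιU) := by
      have hfun : (⇑πU ∘ ⇑(B ∘ₗ ιU))
          = ⇑(kmap (fun t t' : {x : Mid // Up x} => (pU t).1 ⋖ (pU t').2)) := by
        funext c
        funext u
        exact hcomp c u
      rw [← hfun] at hLU
      exact Function.Injective.of_comp hLU
    calc Fintype.card {x : Mid // Up x}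
        = Module.finrank (ZMod 2) ({x : Mid // Up x} → ZMod 2) :=
          (Module.finrank_fintype_fun_eq_card _).symm
      _ = Module.finrank (ZMod 2) (LinearMap.range (B ∘ₗ ιU)) :=
          (LinearMap.finrank_range_of_inj hinj).symm
      _ ≤ Module.finrank (ZMod 2) (LinearMap.range B) :=
          Submodule.finrank_mono (LinearMap.range_comp_le_range _ _)
  -- rank of range E is at least card D
  have hD_le : Fintype.card {x : Mid // ¬ Up x}
      ≤ Module.finrank (ZMod 2) (LinearMap.range E) := by
    set ιD : ({x : Mid // ¬ Up x} → ZMod 2) →ₗ[ZMod 2] (Mid → ZMod 2) :=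
      kmap (fun (x : Mid) (d : {x : Mid // ¬ Up x}) => x = (d : Mid)) with hιDdef
    set πD : (Bot → ZMod 2) →ₗ[ZMod 2] ({x : Mid // ¬ Up x} → ZMod 2) :=
      kmap (fun (d : {x : Mid // ¬ Up x}) (z : Bot) => z = μ d) with hπDdef
    have hLD := kmap_pair_injective hMac pD hpDM pDinj
    have hcomp : ∀ (c : {x : Mid // ¬ Up x} → ZMod 2) d,
        πD (E (ιD c)) d = kmap (fun t t' : {x : Mid // ¬ Up x} =>
          (pD t).1 ⋖ (pD t').2) c d := by
      intro c d
      rw [hπDdef, kmap_eval_point μ, hEdef, hιDdef,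
        kmap_comp_ind (fun (z : Bot) (x : Mid) => (z : α) ⋖ (x : α))
          (fun d' : {x : Mid // ¬ Up x} => ((d' : Mid))) c (μ d),
        kmap_apply]
      refine Finset.sum_congr rfl fun t _ => ?_
      rw [show ((μ d : Bot) : α) = (pD d).1 from rfl, hpD2 t]
    have hinj : Function.Injective (E ∘ₗ ιD) := by
      have hfun : (⇑πD ∘ ⇑(E ∘ₗ ιD))
          = ⇑(kmap (fun t t' : {x : Mid // ¬ Up x} => (pD t).1 ⋖ (pD t').2)) := by
        funext c
        funext d
        exact hcomp c d
      rw [← hfun] at hLD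
      exact Function.Injective.of_comp hLD
    calc Fintype.card {x : Mid // ¬ Up x}
        = Module.finrank (ZMod 2) ({x : Mid // ¬ Up x} → ZMod 2) :=
          (Module.finrank_fintype_fun_eq_card _).symm
      _ = Module.finrank (ZMod 2) (LinearMap.range (E ∘ₗ ιD)) :=
          (LinearMap.finrank_range_of_inj hinj).symm
      _ ≤ Module.finrank (ZMod 2) (LinearMap.range E) :=
          Submodule.finrank_mono (LinearMap.range_comp_le_range _ _)
  -- E ∘ B = 0
  have hEB : E ∘ₗ B = 0 := by
    apply LinearMap.ext
    intro c
    funext z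
    rw [LinearMap.comp_apply, LinearMap.zero_apply, Pi.zero_apply, hEdef, kmap_apply]
    have hdist : ∀ x : Mid, (if (z : α) ⋖ (x : α) then B c x else 0)
        = ∑ y : α, if ((z : α) ⋖ (x : α)) ∧ ((x : α) ⋖ y) then c y else 0 := by
      intro x
      rw [hBdef, kmap_apply]
      split_ifs with h
      · exact Finset.sum_congr rfl fun y _ => by simp [h]
      · symm
        exact Finset.sum_eq_zero fun y _ => by simp [h]
    rw [Finset.sum_congr rfl fun x _ => hdist x, Finset.sum_comm]
    apply Finset.sum_eq_zero
    intro y _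
    have hsplit : (∑ x : Mid, if ((z : α) ⋖ (x : α)) ∧ ((x : α) ⋖ y) then c y else 0)
        = ((Finset.univ.filter fun x : Mid =>
            ((z : α) ⋖ (x : α)) ∧ ((x : α) ⋖ y)).card : ZMod 2) * c y := by
      rw [Finset.sum_ite, Finset.sum_const, Finset.sum_const_zero, add_zero, nsmul_eq_mul]
    rw [hsplit]
    -- show the card is even
    rcases Finset.eq_empty_or_nonempty
      (Finset.univ.filter fun x : Mid => ((z : α) ⋖ (x : α)) ∧ ((x : α) ⋖ y)) with hemp | hne
    · rw [hemp]
      simp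
    · obtain ⟨x, hx⟩ := hne
      rw [Finset.mem_filter] at hx
      have hrky : R.rk y = k := by
        have := R.rk_covBy _ _ hx.2.2
        have := x.2
        omega
      have heven := hS.even_mid y (z : α) hrky z.2
      have hcard : (Finset.univ.filter fun x : Mid =>
          ((z : α) ⋖ (x : α)) ∧ ((x : α) ⋖ y)).card
          = {x : α | R.rk x = k - 1 ∧ (z : α) ⋖ x ∧ x ⋖ y}.ncard := by
        rw [Set.ncard_eq_toFinset_card']
        apply Finset.card_bij (fun (x : Mid) _ => (x : α))
        · intro a ha
          rw [Finset.mem_filter] at ha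
          rw [Set.mem_toFinset]
          exact ⟨a.2, ha.2⟩
        · intro a _ b _ hab
          exact Subtype.ext hab
        · intro b hb
          rw [Set.mem_toFinset] at hb
          exact ⟨⟨b, hb.1⟩, Finset.mem_filter.mpr ⟨Finset.mem_univ _, hb.2⟩, rfl⟩
      rw [hcard, even_cast_zero heven, zero_mul]
  -- the all-ones vector is in the kernel of E
  have hu0 : E (fun _ => (1 : ZMod 2)) = 0 := by
    funext z
    rw [hEdef, kmap_apply, Pi.zero_apply]
    have hcard : (∑ x : Mid, if (z : α) ⋖ (x : α) then (1 : ZMod 2) else 0)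
        = ((Finset.univ.filter fun x : Mid => (z : α) ⋖ (x : α)).card : ZMod 2) := by
      rw [Finset.sum_boole]
    rw [hcard]
    have hcard2 : (Finset.univ.filter fun x : Mid => (z : α) ⋖ (x : α)).card
        = {y : α | (z : α) ⋖ y}.ncard := by
      rw [Set.ncard_eq_toFinset_card']
      apply Finset.card_bij (fun (x : Mid) _ => (x : α))
      · intro a ha
        rw [Finset.mem_filter] at ha
        rw [Set.mem_toFinset]
        exact ha.2
      · intro a _ b _ hab
        exact Subtype.ext hab
      · intro b hb
        rw [Set.mem_toFinset] at hb
        have hrkb : R.rk b = k - 1 := by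
          have := R.rk_covBy _ _ hb
          have := z.2
          omega
        exact ⟨⟨b, hrkb⟩, Finset.mem_filter.mpr ⟨Finset.mem_univ _, hb⟩, rfl⟩
    rw [hcard2]
    exact even_cast_zero (hev (z : α) z.2)
  -- dimension count : range B = ker E
  have hsplitcard : Fintype.card {x : Mid // Up x} + Fintype.card {x : Mid // ¬ Up x}
      = Fintype.card Mid := by
    rw [← Fintype.card_sum]
    exact Fintype.card_congr (Equiv.sumCompl Up)
  have hrn := LinearMap.finrank_range_add_finrank_ker E
  rw [Module.finrank_fintype_fun_eq_card] at hrn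
  have hle : LinearMap.range B ≤ LinearMap.ker E := LinearMap.range_le_ker_iff.mpr hEB
  have hker_le : Module.finrank (ZMod 2) (LinearMap.ker E)
      ≤ Module.finrank (ZMod 2) (LinearMap.range B) := by omega
  have heq : LinearMap.range B = LinearMap.ker E :=
    Submodule.eq_of_le_of_finrank_le hle hker_le
  have hmem : (fun _ => (1 : ZMod 2)) ∈ LinearMap.range B := by
    rw [heq, LinearMap.mem_ker]
    exact hu0
  obtain ⟨c, hc⟩ := hmem
  -- conclusion
  refine ⟨c, ?_⟩
  intro y₁ y₂ hy₁ hy₂ hne hz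
  obtain ⟨z, hz1, hz2⟩ := hz
  have hrkz : R.rk z = k - 1 := by
    have := R.rk_covBy _ _ hz1
    omega
  have h1 : (∑ y : α, if z ⋖ y then c y else 0) = 1 := by
    have := congrFun hc (⟨z, hrkz⟩ : Mid)
    rw [hBdef, kmap_apply] at this
    exact this
  have hset : {y : α | z ⋖ y} = {y₁, y₂} := by
    refine (Set.eq_of_subset_of_ncard_le ?_ ?_ (Set.toFinite _)).symm
    · rintro y (rfl | rfl)
      · exact hz1
      · exact hz2
    · rw [hS.two_covers z hrkz, Set.ncard_pair hne]
  have hcond : ∀ y : α, z ⋖ y ↔ (y = y₁ ∨ y = y₂) := by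
    intro y
    constructor
    · intro h
      have : y ∈ ({y₁, y₂} : Set α) := hset ▸ h
      simpa using this
    · rintro (rfl | rfl)
      · exact hz1
      · exact hz2
  have h2 : (∑ y : α, if z ⋖ y then c y else 0)
      = (∑ y : α, if y = y₁ then c y else 0) + (∑ y : α, if y = y₂ then c y else 0) := by
    rw [← Finset.sum_add_distrib]
    refine Finset.sum_congr rfl fun y _ => ?_
    by_cases hyy1 : y = y₁
    · subst hyy1
      simp [hcond, hne]
    · by_cases hyy2 : y = y₂
      · subst hyy2
        simp [hcond, hyy1]
      · simp [hcond, hyy1, hyy2]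
  rw [h2, Finset.sum_ite_eq' Finset.univ y₁ c, Finset.sum_ite_eq' Finset.univ y₂ c,
    if_pos (Finset.mem_univ _), if_pos (Finset.mem_univ _)] at h1
  intro hcc
  rw [hcc, CharTwo.add_self_eq_zero] at h1
  exact zero_ne_one h1
end

section
/- Let S be a ranked poset, M an acyclic matching on S, and (x, y) ∈ M with rk(y) = k = rk(S). Then the only M-path P with initial element y whose terminal element covers x is the trivial path P : y (of length 0). In particular, with M' = M \ {(x,y)}, we have Σ_{y'' ∈ ∇(x)} ℓ^{M'}_{(y, y'')} = 1 in ℤ₂. -/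
open scoped Classical

universe u

variable {α : Type u}

private lemma steps_mono [PartialOrder α] {M M' : Set (α × α)} (h : M' ⊆ M) :
    ∀ (l : List (α × α)) (a b : α), IsMPathSteps M' a l b → IsMPathSteps M a l b
  | [], _, _, hp => hp
  | (_, y') :: rest, _, b, hp =>
    ⟨hp.1, h hp.2.1, hp.2.2.1, steps_mono h rest y' b hp.2.2.2⟩

/-- for `(x,y) ∈ M` with `rk y = k = rk S`, the only `M`-path with initial
element `y` whose terminal element covers `x` is the trivial one; hence with
`M' = M \ {(x,y)}`, `∑_{y'' ∈ ∇(x)} ℓ^{M'}_{(y,y'')} = 1` in `ℤ₂`. -/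
theorem stmt9 [PartialOrder α] [Fintype α] (R : RankStruct α) (M : Set (α × α))
    (hM : IsAcyclicMatching M) (k : ℕ) (x y : α) (hxy : (x, y) ∈ M)
    (hy : R.rk y = k) (hk : ∀ a : α, R.rk a ≤ k) :
    (∀ (l : List (α × α)) (z : α), IsMPathSteps M y l z → x ⋖ z → l = []) ∧
    ∑ y'' : α, (if x ⋖ y'' then ell (M \ {(x, y)}) y y'' else 0) = 1 := by
  have hcov : x ⋖ y := hM.1.1 (x, y) hxy
  have part1 : ∀ (l : List (α × α)) (z : α), IsMPathSteps M y l z → x ⋖ z → l = [] := by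
    intro l z hl hz
    by_cases hzy : z = y
    · rw [hzy] at hl; exact hM.2 y l hl
    · exfalso
      have hcl : IsMPathSteps M z ((x, y) :: l) z :=
        ⟨hz, hxy, fun h => hzy h, hl⟩
      have := hM.2 z _ hcl
      simp at this
  refine ⟨part1, ?_⟩
  have key : ∀ y'' : α, x ⋖ y'' →
      ell (M \ {(x, y)}) y y'' = if y'' = y then 1 else 0 := by
    intro y'' h
    unfold ell
    by_cases hyy : y'' = y
    · have hs : {l : List (α × α) | IsMPathSteps (M \ {(x, y)}) y l y''} = {[]} := by
        ext l
        simp only [Set.mem_setOf_eq, Set.mem_singleton_iff]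
        constructor
        · intro hl
          exact part1 l y'' (steps_mono Set.diff_subset l y y'' hl) h
        · rintro rfl; exact hyy.symm
      rw [hs, Set.ncard_singleton, if_pos hyy]
      simp
    · have hs : {l : List (α × α) | IsMPathSteps (M \ {(x, y)}) y l y''} = ∅ := by
        ext l
        simp only [Set.mem_setOf_eq, Set.mem_empty_iff_false, iff_false]
        intro hl
        have hl0 := part1 l y'' (steps_mono Set.diff_subset l y y'' hl) h
        subst hl0
        exact hyy hl.symm
      rw [hs, Set.ncard_empty, if_neg hyy]
      simp
  have hterm : ∀ y'' : α, (if x ⋖ y'' then ell (M \ {(x, y)}) y y'' else 0)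
      = if y'' = y then 1 else 0 := by
    intro y''
    by_cases h : x ⋖ y''
    · rw [if_pos h, key y'' h]
    · rw [if_neg h, if_neg]
      rintro rfl; exact h hcov
  rw [Finset.sum_congr rfl fun y'' _ => hterm y'']
  simp
end

section
/- Let G be an embedded connected planar graph with face poset S^G, let T be a spanning tree of G and T* the dual spanning tree. If M is an acyclic matching on F(T) matching all edges of T, and M* is an acyclic matching on F(T*) matching all edges of T*, then M₀ = M ∪ {(e, f) : e ∈ E(G), f ∈ F(G), (f, e) ∈ M*} is an acyclic matching on S^G in which every edge of G (every rank-1 element of S^G) is matched. -/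
open scoped Classical

universe u

variable {α : Type u}

section Inc

/-- Order on `A ⊕ B` generated by an incidence relation `I : A → B → Prop`. -/
def IncLE {A B : Type*} (I : A → B → Prop) (x y : A ⊕ B) : Prop :=
  x = y ∨ ∃ a b, x = Sum.inl a ∧ y = Sum.inr b ∧ I a b

/-- The two-level (vertex–edge style) incidence poset. -/
def incPartialOrder {A B : Type*} (I : A → B → Prop) : PartialOrder (A ⊕ B) where
  le := IncLE I
  le_refl x := Or.inl rfl
  le_trans x y z hxy hyz := by
    rcases hxy with rfl | ⟨a, b, rfl, rfl, h⟩
    · exact hyz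
    · rcases hyz with rfl | ⟨a', b', h1, h2, h3⟩
      · exact Or.inr ⟨a, b, rfl, rfl, h⟩
      · exact absurd h1 (by simp)
  le_antisymm x y hxy hyx := by
    rcases hxy with rfl | ⟨a, b, rfl, rfl, h⟩
    · rfl
    · rcases hyx with h1 | ⟨a', b', h1, h2, h3⟩
      · exact h1.symm
      · exact absurd h1 (by simp)

/-- Strict relation of the three-level incidence poset. -/
inductive TriLt {A B C : Type*} (I : A → B → Prop) (J : B → C → Prop) :
    A ⊕ B ⊕ C → A ⊕ B ⊕ C → Prop
  | ab {a b} : I a b → TriLt I J (Sum.inl a) (Sum.inr (Sum.inl b))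
  | bc {b c} : J b c → TriLt I J (Sum.inr (Sum.inl b)) (Sum.inr (Sum.inr c))
  | ac {a b c} : I a b → J b c → TriLt I J (Sum.inl a) (Sum.inr (Sum.inr c))

/-- The three-level (vertex–edge–face style) incidence poset. -/
def triPartialOrder {A B C : Type*} (I : A → B → Prop) (J : B → C → Prop) :
    PartialOrder (A ⊕ B ⊕ C) where
  le x y := x = y ∨ TriLt I J x y
  le_refl x := Or.inl rfl
  le_trans x y z hxy hyz := by
    rcases hxy with rfl | h
    · exact hyz
    · rcases hyz with rfl | h'
      · exact Or.inr h
      · cases h with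
        | ab hI => cases h' with
          | bc hJ => exact Or.inr (TriLt.ac hI hJ)
        | bc hJ => cases h'
        | ac hI hJ => cases h'
  le_antisymm x y hxy hyx := by
    rcases hxy with rfl | h
    · rfl
    · rcases hyx with h' | h'
      · exact h'.symm
      · cases h <;> cases h'

/-- The natural rank function of the three-level poset. -/
def triRk {A B C : Type*} : A ⊕ B ⊕ C → ℕ :=
  Sum.elim (fun _ => 0) (Sum.elim (fun _ => 1) (fun _ => 2))

end Inc

section Graph

open SimpleGraph

variable {V : Type u} (G : SimpleGraph V)

/-- Dart reversal as a permutation. -/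
def symmPerm : Equiv.Perm G.Dart where
  toFun := SimpleGraph.Dart.symm
  invFun := SimpleGraph.Dart.symm
  left_inv d := SimpleGraph.Dart.symm_symm d
  right_inv d := SimpleGraph.Dart.symm_symm d

/-- A rotation system (combinatorial embedding) of a graph: a permutation of the darts
fixing tails, acting with a single cycle on the darts at each vertex. -/
structure RotSys where
  ρ : Equiv.Perm G.Dart
  fst_eq : ∀ d : G.Dart, (ρ d).fst = d.fst
  cyclic : ∀ d d' : G.Dart, d.fst = d'.fst → ∃ n : ℕ, (ρ ^ n) d = d'

variable {G}

/-- The face permutation of a rotation system. -/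
def RotSys.phi (E : RotSys G) : Equiv.Perm G.Dart := E.ρ * symmPerm G

/-- Two darts lie on the same face iff they are in the same orbit of the face permutation. -/
def RotSys.faceSetoid (E : RotSys G) : Setoid G.Dart where
  r d d' := ∃ n : ℤ, (E.phi ^ n) d = d'
  iseqv := by
    refine ⟨fun d => ⟨0, rfl⟩, ?_, ?_⟩
    · rintro d d' ⟨n, rfl⟩
      exact ⟨-n, by rw [← Equiv.Perm.mul_apply, ← zpow_add, neg_add_cancel, zpow_zero,
        Equiv.Perm.one_apply]⟩
    · rintro a b c ⟨n, rfl⟩ ⟨m, rfl⟩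
      exact ⟨m + n, by rw [← Equiv.Perm.mul_apply, ← zpow_add]⟩

/-- The faces of the embedding: orbits of the face permutation. -/
def RotSys.Faces (E : RotSys G) : Type u := Quotient E.faceSetoid

/-- The face on the side of a dart. -/
def RotSys.face (E : RotSys G) (d : G.Dart) : E.Faces := Quotient.mk E.faceSetoid d

/-- Planarity of a combinatorial embedding, via Euler's formula. -/
def RotSys.IsPlanar (E : RotSys G) : Prop :=
  Nat.card V + Nat.card E.Faces = Nat.card G.edgeSet + 2

/-- The partial order of the face poset `V ⊔ E ⊔ F` of an embedded graph. -/
def facePosetOrder (G : SimpleGraph V) (E : RotSys G) :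
    PartialOrder (V ⊕ G.edgeSet ⊕ E.Faces) :=
  triPartialOrder (fun (v : V) (e : G.edgeSet) => v ∈ (e : Sym2 V))
    (fun (e : G.edgeSet) (f : E.Faces) => ∃ d : G.Dart, d.edge = (e : Sym2 V) ∧ E.face d = f)

/-- The partial order of the vertex–edge poset `F(T*)` of the dual subgraph with
edges `E(G) \ E(T)` (vertices are the faces of `G`). -/
def dualTreeOrder (G : SimpleGraph V) (E : RotSys G) (T : SimpleGraph V) :
    PartialOrder (E.Faces ⊕ {e : G.edgeSet // (e : Sym2 V) ∉ T.edgeSet}) :=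
  incPartialOrder (fun (f : E.Faces) (e : {e : G.edgeSet // (e : Sym2 V) ∉ T.edgeSet}) =>
    ∃ d : G.Dart, d.edge = (e.1 : Sym2 V) ∧ E.face d = f)

end Graph

section Helpers

variable {A B C : Type*}

lemma tri_lt_iff {I : A → B → Prop} {J : B → C → Prop} (x y : A ⊕ B ⊕ C) :
    letI := triPartialOrder I J
    x < y ↔ TriLt I J x y := by
  letI := triPartialOrder I J
  constructor
  · rintro ⟨h1, h2⟩
    rcases h1 with rfl | h
    · exact absurd (Or.inl rfl) h2
    · exact h
  · intro h
    refine ⟨Or.inr h, ?_⟩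
    rintro (rfl | h')
    · cases h
    · cases h <;> cases h'

lemma tri_covBy_iff {I : A → B → Prop} {J : B → C → Prop} (x y : A ⊕ B ⊕ C) :
    letI := triPartialOrder I J
    x ⋖ y ↔ ((∃ a b, x = Sum.inl a ∧ y = Sum.inr (Sum.inl b) ∧ I a b) ∨
      (∃ b c, x = Sum.inr (Sum.inl b) ∧ y = Sum.inr (Sum.inr c) ∧ J b c)) := by
  letI := triPartialOrder I J
  constructor
  · rintro ⟨hlt, hmid⟩
    have h := (tri_lt_iff x y).mp hlt
    cases h with
    | ab hI => exact Or.inl ⟨_, _, rfl, rfl, hI⟩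
    | bc hJ => exact Or.inr ⟨_, _, rfl, rfl, hJ⟩
    | @ac a b c hI hJ =>
        exact absurd ((tri_lt_iff _ _).mpr (TriLt.bc hJ))
          (hmid ((tri_lt_iff _ _).mpr (TriLt.ab hI)))
  · rintro (⟨a, b, rfl, rfl, hI⟩ | ⟨b, c, rfl, rfl, hJ⟩)
    · refine ⟨(tri_lt_iff _ _).mpr (TriLt.ab hI), ?_⟩
      intro z hz hzy
      have h1 := (tri_lt_iff _ _).mp hz
      have h2 := (tri_lt_iff _ _).mp hzy
      cases h1 <;> cases h2
    · refine ⟨(tri_lt_iff _ _).mpr (TriLt.bc hJ), ?_⟩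
      intro z hz hzy
      have h1 := (tri_lt_iff _ _).mp hz
      have h2 := (tri_lt_iff _ _).mp hzy
      cases h1 <;> cases h2

lemma inc_lt_iff {I : A → B → Prop} (x y : A ⊕ B) :
    letI := incPartialOrder I
    x < y ↔ ∃ a b, x = Sum.inl a ∧ y = Sum.inr b ∧ I a b := by
  letI := incPartialOrder I
  constructor
  · rintro ⟨h1, h2⟩
    rcases h1 with rfl | h
    · exact absurd (Or.inl rfl) h2
    · exact h
  · rintro ⟨a, b, rfl, rfl, h⟩
    refine ⟨Or.inr ⟨a, b, rfl, rfl, h⟩, ?_⟩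
    rintro (h' | ⟨a', b', h1, h2, h3⟩)
    · exact absurd h' (by simp)
    · exact absurd h1 (by simp)

lemma inc_covBy_iff {I : A → B → Prop} (x y : A ⊕ B) :
    letI := incPartialOrder I
    x ⋖ y ↔ ∃ a b, x = Sum.inl a ∧ y = Sum.inr b ∧ I a b := by
  letI := incPartialOrder I
  constructor
  · rintro ⟨hlt, _⟩
    exact (inc_lt_iff x y).mp hlt
  · intro h
    refine ⟨(inc_lt_iff x y).mpr h, ?_⟩
    intro z hz hzy
    obtain ⟨a, b, rfl, rfl, -⟩ := inc_lt_iff x z |>.mp hz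
    obtain ⟨a', b', h1, -, -⟩ := inc_lt_iff _ y |>.mp hzy
    exact absurd h1 (by simp)

lemma mpath_append_s11 {α : Type*} [PartialOrder α] {M : Set (α × α)} :
    ∀ {l : List (α × α)} {a b : α}, IsMPathSteps M a l b →
      ∀ {x y' : α}, x ⋖ b → (x, y') ∈ M → b ≠ y' →
      IsMPathSteps M a (l ++ [(x, y')]) y'
  | [], a, b, h, x, y', h1, h2, h3 => by
      have hab : a = b := h
      subst hab
      exact ⟨h1, h2, h3, rfl⟩
  | (p, q) :: rest, a, b, h, x, y', h1, h2, h3 => by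
      obtain ⟨hc, hm, hne, hrest⟩ := h
      exact ⟨hc, hm, hne, mpath_append_s11 hrest h1 h2 h3⟩

end Helpers

section MainAux

variable {V : Type u} {G : SimpleGraph V} {E : RotSys G} {T : SimpleGraph V}
  {M : Set ((V ⊕ G.edgeSet ⊕ E.Faces) × (V ⊕ G.edgeSet ⊕ E.Faces))}
  {Mstar : Set ((E.Faces ⊕ {e : G.edgeSet // (e : Sym2 V) ∉ T.edgeSet}) ×
      (E.Faces ⊕ {e : G.edgeSet // (e : Sym2 V) ∉ T.edgeSet}))}

/-- `M₀`-paths starting at an edge stay in `M`. -/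
lemma lemB
    (hMshape : ∀ p ∈ M, ∃ (v : V) (e : G.edgeSet),
        (e : Sym2 V) ∈ T.edgeSet ∧ p = (Sum.inl v, Sum.inr (Sum.inl e))) :
    letI : PartialOrder (V ⊕ G.edgeSet ⊕ E.Faces) := facePosetOrder G E
    ∀ (l : List _) (e : G.edgeSet) (z : V ⊕ G.edgeSet ⊕ E.Faces),
      IsMPathSteps (M ∪ {p | ∃ (f : E.Faces)
          (e' : {e : G.edgeSet // (e : Sym2 V) ∉ T.edgeSet}),
          (Sum.inl f, Sum.inr e') ∈ Mstar ∧
          p = (Sum.inr (Sum.inl e'.1), Sum.inr (Sum.inr f))})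
        (Sum.inr (Sum.inl e)) l z →
      IsMPathSteps M (Sum.inr (Sum.inl e)) l z := by
  letI : PartialOrder (V ⊕ G.edgeSet ⊕ E.Faces) := facePosetOrder G E
  intro l
  induction l with
  | nil => intro e z h; exact h
  | cons p rest ih =>
    obtain ⟨x, y'⟩ := p
    intro e z h
    obtain ⟨hc, hm, hne, hrest⟩ := h
    rcases (tri_covBy_iff x (Sum.inr (Sum.inl e))).mp hc with
      ⟨a, b, rfl, hb, hI⟩ | ⟨b, c, rfl, hb, hJ⟩
    · -- x = Sum.inl a
      rcases hm with hm | ⟨f, e', hst, heq⟩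
      · obtain ⟨v, e'', he'', heq⟩ := hMshape _ hm
        have hy' : y' = Sum.inr (Sum.inl e'') := congrArg Prod.snd heq
        subst hy'
        exact ⟨hc, hm, hne, ih e'' z hrest⟩
      · exact absurd (congrArg Prod.fst heq) (by simp)
    · exact absurd hb (by simp)

/-- `M₀`-paths among faces translate to reversed `Mstar`-paths in the dual poset. -/
lemma lemA
    (hMshape : ∀ p ∈ M, ∃ (v : V) (e : G.edgeSet),
        (e : Sym2 V) ∈ T.edgeSet ∧ p = (Sum.inl v, Sum.inr (Sum.inl e)))
    (hMstarM : @IsMatching _ (dualTreeOrder G E T) Mstar) :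
    ∀ (l : List ((V ⊕ G.edgeSet ⊕ E.Faces) × (V ⊕ G.edgeSet ⊕ E.Faces)))
      (f1 fend : E.Faces) (e1 : {e : G.edgeSet // (e : Sym2 V) ∉ T.edgeSet}),
      (Sum.inl f1, Sum.inr e1) ∈ Mstar →
      (@IsMPathSteps _ (facePosetOrder G E) (M ∪ {p | ∃ (f : E.Faces)
            (e' : {e : G.edgeSet // (e : Sym2 V) ∉ T.edgeSet}),
            (Sum.inl f, Sum.inr e') ∈ Mstar ∧
            p = (Sum.inr (Sum.inl e'.1), Sum.inr (Sum.inr f))})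
          (Sum.inr (Sum.inr f1)) l (Sum.inr (Sum.inr fend))) →
      ∃ (en : {e : G.edgeSet // (e : Sym2 V) ∉ T.edgeSet})
        (dl : List ((E.Faces ⊕ {e : G.edgeSet // (e : Sym2 V) ∉ T.edgeSet}) ×
          (E.Faces ⊕ {e : G.edgeSet // (e : Sym2 V) ∉ T.edgeSet}))),
        (Sum.inl fend, Sum.inr en) ∈ Mstar ∧
        @IsMPathSteps _ (dualTreeOrder G E T) Mstar (Sum.inr en) dl (Sum.inr e1) := by
  letI : PartialOrder (V ⊕ G.edgeSet ⊕ E.Faces) := facePosetOrder G E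
  letI : PartialOrder (E.Faces ⊕ {e : G.edgeSet // (e : Sym2 V) ∉ T.edgeSet}) :=
    dualTreeOrder G E T
  intro l
  induction l with
  | nil =>
    intro f1 fend e1 h1 hpath
    have : (Sum.inr (Sum.inr f1) : V ⊕ G.edgeSet ⊕ E.Faces) = Sum.inr (Sum.inr fend) := hpath
    have hf : f1 = fend := by simpa using this
    subst hf
    exact ⟨e1, [], h1, rfl⟩
  | cons p rest ih =>
    obtain ⟨x, y⟩ := p
    intro f1 fend e1 h1 hpath
    obtain ⟨hc, hm, hne, hrest⟩ := hpath
    rcases (tri_covBy_iff x (Sum.inr (Sum.inr f1))).mp hc with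
      ⟨a, b, rfl, hb, hI⟩ | ⟨b, c, hxb, hb, hJ⟩
    · exact absurd hb (by simp)
    · -- x is an edge covered by f1
      have hcf : f1 = c := by simpa using hb
      rw [← hcf] at hJ
      rcases hm with hm | ⟨f2, e2, hst2, heq⟩
      · obtain ⟨v, e'', he'', heq⟩ := hMshape _ hm
        have := congrArg Prod.fst heq
        rw [hxb] at this
        exact absurd this (by simp)
      · have hx2 : x = Sum.inr (Sum.inl e2.1) := congrArg Prod.fst heq
        have hy2 : y = Sum.inr (Sum.inr f2) := congrArg Prod.snd heq
        subst hy2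
        have hb2 : b = e2.1 := by rw [hxb] at hx2; simpa using hx2
        subst hb2
        have hf12 : f1 ≠ f2 := by
          intro h; exact hne (by rw [h])
        obtain ⟨en, dl, hen, hdl⟩ := ih f2 fend e2 hst2 hrest
        have hcov : (Sum.inl f1 : E.Faces ⊕ {e : G.edgeSet // (e : Sym2 V) ∉ T.edgeSet})
            ⋖ Sum.inr e2 := by
          exact (inc_covBy_iff _ _).mpr ⟨f1, e2, rfl, rfl, hJ⟩
        have hne2 : (Sum.inr e2 : E.Faces ⊕ {e : G.edgeSet // (e : Sym2 V) ∉ T.edgeSet})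
            ≠ Sum.inr e1 := by
          by_cases hpq : ((Sum.inl f2, Sum.inr e2) :
              (E.Faces ⊕ {e : G.edgeSet // (e : Sym2 V) ∉ T.edgeSet}) ×
                (E.Faces ⊕ {e : G.edgeSet // (e : Sym2 V) ∉ T.edgeSet}))
              = (Sum.inl f1, Sum.inr e1)
          · have : f2 = f1 := by simpa using congrArg Prod.fst hpq
            exact absurd this.symm hf12
          · exact (hMstarM.2 _ hst2 _ h1 hpq).2.2.2
        exact ⟨en, dl ++ [(Sum.inl f1, Sum.inr e1)], hen,
          mpath_append_s11 hdl hcov h1 hne2⟩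

end MainAux

/-- for an embedded connected planar graph `G` with spanning tree `T`,
combining an acyclic matching `M` on `F(T)` matching all edges of `T` (viewed inside
the face poset `S^G`) with the reversal of an acyclic matching `M*` on the dual tree
poset `F(T*)` matching all edges of `T*` yields an acyclic matching
`M₀ = M ∪ {(e,f) : (f,e) ∈ M*}` on `S^G` in which every edge of `G` is matched. -/
theorem stmt11 {V : Type u} [Fintype V] (G : SimpleGraph V)
    (hconn : G.Connected) (E : RotSys G) (hpl : E.IsPlanar)
    (T : SimpleGraph V) (hle : T ≤ G) (hT : T.IsTree)
    (M : Set ((V ⊕ G.edgeSet ⊕ E.Faces) × (V ⊕ G.edgeSet ⊕ E.Faces)))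
    (hM : @IsAcyclicMatching _ (facePosetOrder G E) M)
    (hMshape : ∀ p ∈ M, ∃ (v : V) (e : G.edgeSet),
        (e : Sym2 V) ∈ T.edgeSet ∧ p = (Sum.inl v, Sum.inr (Sum.inl e)))
    (hMall : ∀ e : G.edgeSet, (e : Sym2 V) ∈ T.edgeSet →
        ¬ MCritical M (Sum.inr (Sum.inl e)))
    (Mstar : Set ((E.Faces ⊕ {e : G.edgeSet // (e : Sym2 V) ∉ T.edgeSet}) ×
        (E.Faces ⊕ {e : G.edgeSet // (e : Sym2 V) ∉ T.edgeSet})))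
    (hMstar : @IsAcyclicMatching _ (dualTreeOrder G E T) Mstar)
    (hMstarAll : ∀ e : {e : G.edgeSet // (e : Sym2 V) ∉ T.edgeSet},
        ¬ MCritical Mstar (Sum.inr e)) :
    letI : PartialOrder (V ⊕ G.edgeSet ⊕ E.Faces) := facePosetOrder G E
    let M₀ : Set ((V ⊕ G.edgeSet ⊕ E.Faces) × (V ⊕ G.edgeSet ⊕ E.Faces)) :=
      M ∪ {p | ∃ (f : E.Faces) (e : {e : G.edgeSet // (e : Sym2 V) ∉ T.edgeSet}),
        (Sum.inl f, Sum.inr e) ∈ Mstar ∧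
        p = (Sum.inr (Sum.inl e.1), Sum.inr (Sum.inr f))}
    IsAcyclicMatching M₀ ∧
      ∀ e : G.edgeSet, ¬ MCritical M₀ (Sum.inr (Sum.inl e)) := by
  intro M₀
  refine ⟨⟨⟨?_, ?_⟩, ?_⟩, ?_⟩
  · -- every pair of M₀ is a covering pair
    rintro ⟨x, y⟩ (hm | ⟨f, e, hst, heq⟩)
    · exact hM.1.1 _ hm
    · injection heq with h1 h2; subst h1; subst h2
      have hcov := hMstar.1.1 _ hst
      obtain ⟨a, b, ha, hb, hI⟩ := (inc_covBy_iff (Sum.inl f) (Sum.inr e)).mp hcov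
      have ha' : f = a := by simpa using ha
      have hb' : e = b := by simpa using hb
      rw [← ha', ← hb'] at hI
      exact (tri_covBy_iff _ _).mpr (Or.inr ⟨e.1, f, rfl, rfl, hI⟩)
  · -- disjointness of pairs
    rintro ⟨x, y⟩ hp ⟨x', y'⟩ hq hpq
    rcases hp with hp | ⟨f, e, hst, heq⟩
    · rcases hq with hq | ⟨f', e', hst', heq'⟩
      · exact hM.1.2 _ hp _ hq hpq
      · obtain ⟨v, eM, heM, heqM⟩ := hMshape _ hp
        injection heqM with h1 h2; subst h1; subst h2
        injection heq' with h1 h2; subst h1; subst h2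
        refine ⟨by simp, by simp, ?_, by simp⟩
        simp only [ne_eq, Prod.mk.injEq, Sum.inr.injEq, Sum.inl.injEq]
        intro h
        exact e'.2 (h ▸ heM)
    · rcases hq with hq | ⟨f', e', hst', heq'⟩
      · obtain ⟨v, eM, heM, heqM⟩ := hMshape _ hq
        injection heqM with h1 h2; subst h1; subst h2
        injection heq with h1 h2; subst h1; subst h2
        refine ⟨by simp, ?_, by simp, by simp⟩
        simp only [ne_eq, Prod.mk.injEq, Sum.inr.injEq, Sum.inl.injEq]
        intro h
        exact e.2 (h.symm ▸ heM)
      · injection heq with h1 h2; subst h1; subst h2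
        injection heq' with h1 h2; subst h1; subst h2
        have hne' : ((Sum.inl f, Sum.inr e) :
            (E.Faces ⊕ {e : G.edgeSet // (e : Sym2 V) ∉ T.edgeSet}) ×
              (E.Faces ⊕ {e : G.edgeSet // (e : Sym2 V) ∉ T.edgeSet}))
            ≠ (Sum.inl f', Sum.inr e') := by
          intro h
          injection h with ha hb
          have hf : f = f' := by simpa using ha
          have he : e = e' := by simpa using hb
          exact hpq (by rw [hf, he])
        have hd := hMstar.1.2 _ hst _ hst' hne'
        have hee : e ≠ e' := by
          intro h; exact hd.2.2.2 (by rw [h])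
        have hff : f ≠ f' := by
          intro h; exact hd.1 (by rw [h])
        refine ⟨?_, by simp, by simp, by simp [hff]⟩
        simp only [ne_eq, Sum.inr.injEq, Sum.inl.injEq]
        intro h
        exact hee (Subtype.ext h)
  · -- acyclicity
    intro y l hpath
    cases l with
    | nil => rfl
    | cons p rest =>
      exfalso
      obtain ⟨x1, y1⟩ := p
      obtain ⟨hc, hm, hne, hrest⟩ := hpath
      rcases hm with hm | ⟨f1, e1, hst, heq⟩
      · -- first pair is from M : whole cycle is an M-cycle
        obtain ⟨v, e, he, heq⟩ := hMshape _ hm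
        injection heq with h1 h2; subst h1; subst h2
        have hMpath : @IsMPathSteps _ (facePosetOrder G E) M y
            ((Sum.inl v, Sum.inr (Sum.inl e)) :: rest) y :=
          ⟨hc, hm, hne, lemB hMshape rest e y hrest⟩
        have := hM.2 y _ hMpath
        simp at this
      · -- first pair is from the dual part: translate to an Mstar-cycle
        injection heq with h1 h2; subst h1; subst h2
        rcases (tri_covBy_iff _ y).mp hc with ⟨a, b, hxa, hyb, hI⟩ | ⟨b, c, hxb, hyc, hJ⟩
        · exact absurd hxa (by simp)
        · subst hyc
          have hb : e1.1 = b := by simpa using hxb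
          rw [← hb] at hJ
          have hcf : c ≠ f1 := fun h => hne (by rw [h])
          obtain ⟨en, dl, hen, hdl⟩ := lemA hMshape hMstar.1 rest f1 c e1 hst hrest
          letI : PartialOrder (E.Faces ⊕ {e : G.edgeSet // (e : Sym2 V) ∉ T.edgeSet}) :=
            dualTreeOrder G E T
          have hcov2 : (Sum.inl c : E.Faces ⊕ {e : G.edgeSet // (e : Sym2 V) ∉ T.edgeSet})
              ⋖ Sum.inr e1 :=
            (inc_covBy_iff _ _).mpr ⟨c, e1, rfl, rfl, hJ⟩
          have hne3 : (Sum.inr e1 : E.Faces ⊕ {e : G.edgeSet // (e : Sym2 V) ∉ T.edgeSet})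
              ≠ Sum.inr en := by
            by_cases hpq : ((Sum.inl f1, Sum.inr e1) :
                (E.Faces ⊕ {e : G.edgeSet // (e : Sym2 V) ∉ T.edgeSet}) ×
                  (E.Faces ⊕ {e : G.edgeSet // (e : Sym2 V) ∉ T.edgeSet}))
                = (Sum.inl c, Sum.inr en)
            · have : f1 = c := by simpa using congrArg Prod.fst hpq
              exact absurd this.symm hcf
            · exact (hMstar.1.2 _ hst _ hen hpq).2.2.2
          have hcycle := @mpath_append_s11 _ (dualTreeOrder G E T) Mstar _ _ _ hdl _ _
            hcov2 hen hne3
          have := hMstar.2 _ _ hcycle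
          simp at this
  · -- every edge is matched
    intro e hcrit
    by_cases he : (e : Sym2 V) ∈ T.edgeSet
    · exact hMall e he fun p hp => hcrit p (Or.inl hp)
    · refine hMstarAll ⟨e, he⟩ fun p hp => ?_
      have hcov := hMstar.1.1 p hp
      obtain ⟨f, e'', h1, h2, hI⟩ := (inc_covBy_iff p.1 p.2).mp hcov
      have hp' : (Sum.inl f, Sum.inr e'') ∈ Mstar := by
        rw [← h1, ← h2]; exact hp
      constructor
      · rw [h1]; simp
      · rw [h2]
        simp only [ne_eq, Sum.inr.injEq]
        intro hq
        have hmem : (Sum.inr (Sum.inl e''.1), Sum.inr (Sum.inr f)) ∈ M₀ :=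
          Or.inr ⟨f, e'', hp', rfl⟩
        exact (hcrit _ hmem).1 (by rw [hq])
end

section
/- The face poset of any planar embedding of a connected Eulerian planar graph G (with at least one edge) is a sphere-like ranked poset of rank 2: (i) each edge lies on the boundary of exactly two faces; (ii) for each face f and vertex v, the number of edges e with v ⋖ e ⋖ f is even; (iii) there is an acyclic matching on the face poset matching all edges. Moreover every vertex (rank-0 element) is covered by an even number of edges. -/
open scoped Classical

universe u

variable {α : Type u}

/-!
Over `ℤ/2`, the face boundary `∂₂ : ℤ/2^F → ℤ/2^E` and the edge boundary `∂₁ : ℤ/2^E → ℤ/2^V`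
satisfy `∂₁ ∂₂ = 0`. Connectivity gives `ker ∂₂ ⊆ {0, 1}` and, through a breadth-first spanning
tree `T`, `dim ker ∂₁ ≤ |E| - |V| + 1`; by Euler's formula this is `|F| - 1 ≤ rank ∂₂`, so every
cycle is a face boundary. As `G` is Eulerian, the all-ones edge chain is a cycle, so `∂₂ s = 1`
for some `s`: the two sides of every edge get different values of `s`, and in particular lie on
different faces. The rotation then matches the darts at `v` having `f` on one side with those
having `f` on the other side, which gives the even counts.

The acyclic matching pairs every vertex but the root with its edge towards the root in `T`, and
every face but a root face with an edge of a spanning tree of the dual graph on the edges outside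
`T`. By Euler's formula the two trees use every edge, and the distances to the roots are
monotone along matching paths.
-/

section Potential

variable [PartialOrder α] {ι β : Type*} [Preorder β] (m : ι → α × α) (φ : ι → β)

lemma IsMPathSteps.exists_lt_of_ne_nil
    (hφ : ∀ i j, (m j).1 ⋖ (m i).2 → (m i).2 ≠ (m j).2 → φ j < φ i) :
    ∀ {i : ι} {l : List (α × α)} {z : α}, IsMPathSteps (Set.range m) (m i).2 l z → l ≠ [] →
      ∃ k, z = (m k).2 ∧ φ k < φ i
  | _, [], _, _, hl => absurd rfl hl
  | i, (x, y') :: rest, z, ⟨hcov, ⟨j, hj⟩, hne, hrest⟩, _ => by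
    obtain ⟨rfl, rfl⟩ := Prod.mk.inj hj.symm
    have hji : φ j < φ i := hφ i j hcov hne
    rcases eq_or_ne rest [] with rfl | hrest_ne
    · exact ⟨j, hrest.symm, hji⟩
    · obtain ⟨k, rfl, hkj⟩ := exists_lt_of_ne_nil hφ hrest hrest_ne
      exact ⟨k, rfl, hkj.trans hji⟩

/-- `φ` has to drop along each step `(m i).2 ⋗ (m j).1 ↣ (m j).2` of an `M`-path only from a
matched element `(m i).2`: a closed path starts where its last step ends. -/
lemma isAcyclicMatching_range_of_potential (hm : IsMatching (Set.range m))
    (hφ : ∀ i j, (m j).1 ⋖ (m i).2 → (m i).2 ≠ (m j).2 → φ j < φ i) :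
    IsAcyclicMatching (Set.range m) := by
  refine ⟨hm, fun y l hl => ?_⟩
  rcases l with _ | ⟨⟨x, y'⟩, rest⟩
  · rfl
  obtain ⟨hcov, ⟨j, hj⟩, hne, hrest⟩ := hl
  obtain ⟨rfl, rfl⟩ := Prod.mk.inj hj.symm
  rcases eq_or_ne rest [] with rfl | hrest_ne
  · exact absurd hrest.symm hne
  obtain ⟨k, rfl, hkj⟩ := IsMPathSteps.exists_lt_of_ne_nil m φ hφ hrest hrest_ne
  exact absurd (hφ k j hcov hne) hkj.not_gt

end Potential

section TriPoset

variable {A B C : Type*} (I : A → B → Prop) (J : B → C → Prop)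

lemma triPartialOrder_lt_iff {x y : A ⊕ B ⊕ C} :
    letI := triPartialOrder I J
    x < y ↔ TriLt I J x y := by
  let _ := triPartialOrder I J
  refine ⟨fun h => h.1.resolve_left (ne_of_lt h), fun h => ⟨Or.inr h, ?_⟩⟩
  rintro (rfl | h')
  · cases h
  · cases h <;> cases h'

lemma triPartialOrder_covBy_iff {x y : A ⊕ B ⊕ C} :
    letI := triPartialOrder I J
    x ⋖ y ↔ (∃ a b, x = .inl a ∧ y = .inr (.inl b) ∧ I a b) ∨
      (∃ b c, x = .inr (.inl b) ∧ y = .inr (.inr c) ∧ J b c) := by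
  let _ := triPartialOrder I J
  simp only [CovBy, triPartialOrder_lt_iff]
  constructor
  · rintro ⟨h | h | @⟨a, b, c, hab, hbc⟩, hmin⟩
    · exact Or.inl ⟨_, _, rfl, rfl, h⟩
    · exact Or.inr ⟨_, _, rfl, rfl, h⟩
    · exact absurd (TriLt.bc hbc) (hmin (TriLt.ab hab))
  · rintro (⟨a, b, rfl, rfl, h⟩ | ⟨b, c, rfl, rfl, h⟩)
    · exact ⟨.ab h, fun z h₁ h₂ => by cases h₁ <;> cases h₂⟩
    · exact ⟨.bc h, fun z h₁ h₂ => by cases h₁; cases h₂⟩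

def triRankStruct : @RankStruct (A ⊕ B ⊕ C) (triPartialOrder I J) :=
  letI := triPartialOrder I J
  { rk := triRk
    strict_mono := fun x y h => by
      cases (triPartialOrder_lt_iff I J).1 h <;> simp [triRk]
    rk_covBy := fun x y h => by
      rcases (triPartialOrder_covBy_iff I J).1 h with ⟨a, b, rfl, rfl, -⟩ | ⟨b, c, rfl, rfl, -⟩ <;>
        simp [triRk] }

lemma triPartialOrder_setOf_inl_covBy (a : A) :
    letI := triPartialOrder I J
    {y | (.inl a : A ⊕ B ⊕ C) ⋖ y} = (Sum.inr ∘ Sum.inl) '' {b | I a b} := by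
  ext y
  simp [triPartialOrder_covBy_iff, eq_comm, and_comm]

lemma triPartialOrder_setOf_inr_inl_covBy (b : B) :
    letI := triPartialOrder I J
    {y | (.inr (.inl b) : A ⊕ B ⊕ C) ⋖ y} = (Sum.inr ∘ Sum.inr) '' {c | J b c} := by
  ext y
  simp [triPartialOrder_covBy_iff, eq_comm, and_comm]

lemma triPartialOrder_setOf_between (a : A) (c : C) :
    letI := triPartialOrder I J
    {x | triRk x = 1 ∧ (.inl a : A ⊕ B ⊕ C) ⋖ x ∧ x ⋖ .inr (.inr c)} =
      (Sum.inr ∘ Sum.inl) '' {b | I a b ∧ J b c} := by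
  ext x
  constructor
  · simp only [Set.mem_ofPred_eq, triPartialOrder_covBy_iff]
    aesop
  · rintro ⟨b, ⟨hab, hbc⟩, rfl⟩
    exact ⟨rfl, (triPartialOrder_covBy_iff I J).2 (.inl ⟨a, b, rfl, rfl, hab⟩),
      (triPartialOrder_covBy_iff I J).2 (.inr ⟨b, c, rfl, rfl, hbc⟩)⟩

lemma triRankStruct_sphereLike [Nonempty C] (htwo : ∀ b, {c | J b c}.ncard = 2)
    (heven : ∀ a c, Even {b | I a b ∧ J b c}.ncard)
    (hmatch : letI := triPartialOrder I J
      ∃ M : Set ((A ⊕ B ⊕ C) × (A ⊕ B ⊕ C)), IsAcyclicMatching M ∧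
        ∀ b, ¬ MCritical M (.inr (.inl b))) :
    letI := triPartialOrder I J
    SphereLike (triRankStruct I J) 2 := by
  let _ := triPartialOrder I J
  have hinj₁ : (Sum.inr ∘ Sum.inl : B → A ⊕ B ⊕ C).Injective :=
    Sum.inr_injective.comp Sum.inl_injective
  have hinj₂ : (Sum.inr ∘ Sum.inr : C → A ⊕ B ⊕ C).Injective :=
    Sum.inr_injective.comp Sum.inr_injective
  have hrk : (triRankStruct I J).rk = triRk := rfl
  refine ⟨le_rfl, ?_, ⟨.inr (.inr (Classical.arbitrary C)), rfl⟩, ?_, ?_, ?_⟩ <;>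
    simp only [hrk, Nat.reduceSub]
  · rintro (a | b | c) <;> simp [triRk]
  · rintro (a | b | c) hx <;> simp only [triRk, Sum.elim_inl, Sum.elim_inr] at hx <;> try omega
    rw [triPartialOrder_setOf_inr_inl_covBy, Set.ncard_image_of_injective _ hinj₂, htwo]
  · rintro (a | b | c) (a' | b' | c') hy hz <;>
      simp only [triRk, Sum.elim_inl, Sum.elim_inr] at hy hz <;> try omega
    rw [triPartialOrder_setOf_between, Set.ncard_image_of_injective _ hinj₁]
    exact heven a' c
  · obtain ⟨M, hM, hcrit⟩ := hmatch
    refine ⟨M, hM, ?_⟩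
    rintro (a | b | c) hx <;> simp only [triRk, Sum.elim_inl, Sum.elim_inr] at hx <;> try omega
    exact hcrit b

lemma triPartialOrder_exists_acyclicMatching {A' C' : Type*} {a : A' → A} {b₁ : A' → B}
    {b₂ : C' → B} {c : C' → C} (ha : a.Injective) (hb₁ : b₁.Injective) (hb₂ : b₂.Injective)
    (hc : c.Injective) (hI : ∀ i, I (a i) (b₁ i)) (hJ : ∀ j, J (b₂ j) (c j))
    (hdisj : ∀ i j, b₁ i ≠ b₂ j) (hcover : ∀ b, b ∈ Set.range b₁ ∨ b ∈ Set.range b₂)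
    (φ : A' → ℕ) (hφ : ∀ i i', I (a i') (b₁ i) → i ≠ i' → φ i' < φ i)
    (ψ : C' → ℕ) (hψ : ∀ j j', J (b₂ j') (c j) → j ≠ j' → ψ j < ψ j') :
    letI := triPartialOrder I J
    ∃ M : Set ((A ⊕ B ⊕ C) × (A ⊕ B ⊕ C)), IsAcyclicMatching M ∧
      ∀ b, ¬ MCritical M (.inr (.inl b)) := by
  let _ := triPartialOrder I J
  let m : A' ⊕ C' → (A ⊕ B ⊕ C) × (A ⊕ B ⊕ C) :=
    Sum.elim (fun i => (.inl (a i), .inr (.inl (b₁ i))))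
      (fun j => (.inr (.inl (b₂ j)), .inr (.inr (c j))))
  have hmatch : IsMatching (Set.range m) := by
    refine ⟨?_, ?_⟩
    · rintro _ ⟨i | j, rfl⟩ <;> simp [m, triPartialOrder_covBy_iff, hI, hJ]
    · rintro _ ⟨k, rfl⟩ _ ⟨l, rfl⟩ hne
      replace hne : k ≠ l := by rintro rfl; exact hne rfl
      rcases k with i | j <;> rcases l with i' | j' <;>
        simp_all [m, ha.eq_iff, hb₁.eq_iff, hb₂.eq_iff, hc.eq_iff, (hdisj _ _).symm]
  refine ⟨Set.range m, isAcyclicMatching_range_of_potential m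
    (Sum.elim (fun i => (φ i : ℤ)) (fun j => -(ψ j : ℤ))) hmatch ?_, fun b hb => ?_⟩
  · rintro (i | j) (i' | j') hkl hne <;>
      simp [m, triPartialOrder_covBy_iff] at hkl hne ⊢
    · exact hφ i i' hkl (by rintro rfl; exact hne rfl)
    · exact hψ j j' hkl (by rintro rfl; exact hne rfl)
  · rcases hcover b with ⟨i, rfl⟩ | ⟨j, rfl⟩
    · exact (hb _ ⟨.inl i, rfl⟩).2 rfl
    · exact (hb _ ⟨.inr j, rfl⟩).1 rfl

end TriPoset

namespace SimpleGraph

variable {V : Type*} {G : SimpleGraph V}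

lemma Connected.exists_adj_dist_eq_add_one (hG : G.Connected) {r w : V} (hw : w ≠ r) :
    ∃ u, G.Adj w u ∧ G.dist w r = G.dist u r + 1 := by
  obtain ⟨p, hp⟩ := hG.exists_walk_length_eq_dist w r
  cases p with
  | nil => exact absurd rfl hw
  | @cons _ u _ hadj p =>
    have hwu := hG.dist_triangle (u := w) (v := u) (w := r)
    rw [dist_eq_one_iff_adj.2 hadj] at hwu
    have hur := dist_le p
    rw [Walk.length_cons] at hp
    exact ⟨u, hadj, by omega⟩

variable (G) in
/-- Junk value `w` when no neighbour of `w` is closer to `r`, e.g. for `w = r`. -/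
noncomputable def bfsParent (r w : V) : V :=
  if h : ∃ u, G.Adj w u ∧ G.dist w r = G.dist u r + 1 then h.choose else w

lemma Connected.adj_bfsParent (hG : G.Connected) {r w : V} (hw : w ≠ r) :
    G.Adj w (G.bfsParent r w) := by
  have h := hG.exists_adj_dist_eq_add_one hw
  rw [bfsParent, dif_pos h]
  exact h.choose_spec.1

lemma Connected.dist_bfsParent (hG : G.Connected) {r w : V} (hw : w ≠ r) :
    G.dist w r = G.dist (G.bfsParent r w) r + 1 := by
  have h := hG.exists_adj_dist_eq_add_one hw
  rw [bfsParent, dif_pos h]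
  exact h.choose_spec.2

def Dart.toEdge (d : G.Dart) : G.edgeSet := ⟨d.edge, d.edge_mem⟩

@[simp]
lemma Dart.coe_toEdge (d : G.Dart) : (d.toEdge : Sym2 V) = d.edge := rfl

lemma exists_dart_edge_eq_and_iff {d : G.Dart} {P : G.Dart → Prop} :
    (∃ d' : G.Dart, d'.edge = d.edge ∧ P d') ↔ P d ∨ P d.symm := by
  constructor
  · rintro ⟨d', h, hP⟩
    rcases (dart_edge_eq_iff _ _).1 h with rfl | rfl
    exacts [.inl hP, .inr hP]
  · rintro (hP | hP)
    exacts [⟨d, rfl, hP⟩, ⟨d.symm, d.edge_symm, hP⟩]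

lemma Dart.toEdge_eq_iff {d d' : G.Dart} : d.toEdge = d'.toEdge ↔ d = d' ∨ d = d'.symm := by
  rw [toEdge, toEdge, Subtype.mk.injEq, dart_edge_eq_iff]

@[simp]
lemma Dart.toEdge_symm (d : G.Dart) : d.symm.toEdge = d.toEdge :=
  Subtype.ext d.edge_symm

lemma Dart.toEdge_surjective : Function.Surjective (Dart.toEdge : G.Dart → G.edgeSet) := by
  rintro ⟨e, he⟩
  induction e with
  | _ a b => exact ⟨⟨(a, b), he⟩, rfl⟩

noncomputable def Connected.bfsTreeEdge (hG : G.Connected) (r : V) (w : {w // w ≠ r}) : G.edgeSet :=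
  ⟨s(w, G.bfsParent r w), hG.adj_bfsParent w.2⟩

lemma Connected.eq_bfsParent_of_mem_bfsTreeEdge (hG : G.Connected) {r v : V} {w : {w // w ≠ r}}
    (hv : v ∈ (hG.bfsTreeEdge r w : Sym2 V)) (hvw : v ≠ w) : v = G.bfsParent r w :=
  (Sym2.mem_iff.1 hv).resolve_left hvw

lemma Connected.bfsTreeEdge_injective (hG : G.Connected) (r : V) :
    Function.Injective (hG.bfsTreeEdge r) := by
  intro w u h
  rcases Sym2.eq_iff.1 (congrArg Subtype.val h) with ⟨h₁, -⟩ | ⟨h₁, h₂⟩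
  · exact Subtype.ext h₁
  · have := hG.dist_bfsParent w.2
    have := hG.dist_bfsParent u.2
    rw [← h₁, ← h₂] at *
    omega

lemma ncard_edge_mem_and (v : V) (P : G.edgeSet → Prop) :
    {e : G.edgeSet | v ∈ (e : Sym2 V) ∧ P e}.ncard =
      {d : G.Dart | d.fst = v ∧ P d.toEdge}.ncard := by
  have himage : Dart.toEdge '' {d : G.Dart | d.fst = v ∧ P d.toEdge} =
      {e : G.edgeSet | v ∈ (e : Sym2 V) ∧ P e} := by
    ext e
    obtain ⟨d, rfl⟩ := Dart.toEdge_surjective e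
    constructor
    · rintro ⟨d', ⟨rfl, hP⟩, he⟩
      exact ⟨he ▸ Sym2.mem_mk_left _ _, he ▸ hP⟩
    · rintro ⟨hv, hP⟩
      rcases Sym2.mem_iff.1 hv with rfl | rfl
      · exact ⟨d, ⟨rfl, hP⟩, rfl⟩
      · exact ⟨d.symm, ⟨rfl, Dart.toEdge_eq_iff.2 (.inr rfl) ▸ hP⟩, Dart.toEdge_eq_iff.2 (.inr rfl)⟩
  rw [← himage, Set.InjOn.ncard_image]
  rintro d ⟨rfl, -⟩ d' ⟨hd', -⟩ h
  refine (Dart.toEdge_eq_iff.1 h).resolve_right ?_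
  rintro rfl
  exact d'.adj.ne hd'

variable [Fintype V] [DecidableRel G.Adj]

lemma ncard_edge_mem (v : V) :
    {e : G.edgeSet | v ∈ (e : Sym2 V)}.ncard = G.degree v := by
  have := ncard_edge_mem_and v (fun _ : G.edgeSet => True)
  simp only [and_true] at this
  rw [this, Set.ncard_eq_toFinset_card']
  convert G.dart_fst_fiber_card_eq_degree v
  simp

variable (G) in
/-- Each edge at `v` is counted through its dart out of `v`. -/
noncomputable def edgeBoundary : (G.edgeSet → ZMod 2) →ₗ[ZMod 2] V → ZMod 2 :=
  LinearMap.pi fun v => ∑ d : G.Dart with d.fst = v, LinearMap.proj d.toEdge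

lemma edgeBoundary_apply (x : G.edgeSet → ZMod 2) (v : V) :
    G.edgeBoundary x v = ∑ d : G.Dart with d.fst = v, x d.toEdge := by
  simp [edgeBoundary]

lemma edgeBoundary_one (heul : ∀ v, Even (G.degree v)) : G.edgeBoundary 1 = 0 := by
  ext v
  rw [edgeBoundary_apply]
  simp only [Pi.one_apply, Finset.sum_const, nsmul_eq_mul, mul_one, Pi.zero_apply]
  have hdeg : (Finset.univ.filter fun d : G.Dart => d.fst = v).card = G.degree v := by
    convert G.dart_fst_fiber_card_eq_degree v
  rw [hdeg, ZMod.natCast_eq_zero_iff]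
  exact (heul v).two_dvd

/-- At the child `w` farthest from `r` of a supported tree edge, that edge is the only supported
edge, so the boundary does not vanish at `w`. -/
lemma Connected.eq_zero_of_edgeBoundary_eq_zero (hG : G.Connected) (r : V)
    {x : G.edgeSet → ZMod 2} (hx : G.edgeBoundary x = 0)
    (hsupp : ∀ e, x e ≠ 0 → e ∈ Set.range (hG.bfsTreeEdge r)) : x = 0 := by
  by_contra hne
  obtain ⟨e, he⟩ := Function.ne_iff.1 hne
  obtain ⟨w₀, rfl⟩ := hsupp e he
  obtain ⟨w, hw, hmax⟩ := Finset.exists_max_image {w | x (hG.bfsTreeEdge r w) ≠ 0}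
    (fun w => G.dist w r) ⟨w₀, by simpa using he⟩
  rw [Finset.mem_filter_univ] at hw
  let d₀ : G.Dart := ⟨(w, G.bfsParent r w), hG.adj_bfsParent w.2⟩
  refine hw ?_
  have := congrFun hx w
  rw [edgeBoundary_apply, Finset.sum_eq_single_of_mem d₀ (by simp [d₀])] at this
  · exact this
  intro d hd hne
  rw [Finset.mem_filter_univ] at hd
  by_contra hd₀
  obtain ⟨u, hu⟩ := hsupp _ hd₀
  have hwu : (w : V) ∈ (hG.bfsTreeEdge r u : Sym2 V) := by
    rw [hu, ← hd]; exact Sym2.mem_mk_left _ _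
  rcases eq_or_ne (w : V) u with hwu' | hwu'
  · obtain rfl : w = u := Subtype.ext hwu'
    have hdd₀ : d.toEdge = d₀.toEdge := hu.symm
    rcases Dart.toEdge_eq_iff.1 hdd₀ with rfl | rfl
    · exact hne rfl
    · exact (hG.adj_bfsParent w.2).ne hd.symm
  · have hpar := hG.eq_bfsParent_of_mem_bfsTreeEdge hwu hwu'
    have := hG.dist_bfsParent u.2
    rw [← hpar] at this
    have := hmax u (by simpa [hu] using hd₀)
    omega

lemma Connected.finrank_ker_edgeBoundary_add_le (hG : G.Connected) :
    Module.finrank (ZMod 2) (LinearMap.ker G.edgeBoundary) + (Fintype.card V - 1) ≤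
      Fintype.card G.edgeSet := by
  obtain ⟨r⟩ := hG.nonempty
  let j := Function.ExtendByZero.linearMap (ZMod 2) (hG.bfsTreeEdge r)
  have hinj : Function.Injective (G.edgeBoundary ∘ₗ j) := by
    rw [← LinearMap.ker_eq_bot, LinearMap.ker_eq_bot']
    intro c hc
    have hjc : j c = 0 := hG.eq_zero_of_edgeBoundary_eq_zero r hc fun e he => by
      by_contra hr
      exact he (Function.extend_apply' _ _ _ hr)
    exact Function.extend_injective (hG.bfsTreeEdge_injective r) (0 : G.edgeSet → ZMod 2)
      (hjc.trans (Function.extend_zero (hG.bfsTreeEdge r)).symm)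
  have hrange := LinearMap.finrank_range_of_inj hinj
  have hle := Submodule.finrank_mono (LinearMap.range_comp_le_range j G.edgeBoundary)
  have := LinearMap.finrank_range_add_finrank_ker G.edgeBoundary
  simp only [Module.finrank_fintype_fun_eq_card, Fintype.card_subtype_compl,
    Fintype.card_subtype_eq] at hrange this
  omega

end SimpleGraph

namespace RotSys

open SimpleGraph

variable {V : Type u} {G : SimpleGraph V} (E : RotSys G)

lemma face_phi (d : G.Dart) : E.face (E.phi d) = E.face d :=
  Quotient.sound ⟨-1, by simp [zpow_neg]⟩

lemma face_symm (d : G.Dart) : E.face d.symm = E.face (E.ρ d) := by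
  rw [← E.face_phi d.symm]
  simp [phi, symmPerm]

variable {E} in
lemma eq_of_symm_rotation_invariant {β : Type*} (hG : G.Connected) {g : G.Dart → β}
    (hsymm : ∀ d, g d.symm = g d) (hρ : ∀ d, g (E.ρ d) = g d) (d d' : G.Dart) : g d = g d' := by
  have hpow : ∀ n d, g ((E.ρ ^ n) d) = g d := by
    intro n
    induction n with
    | zero => exact fun _ => rfl
    | succ n ih => exact fun d => by rw [pow_succ, Equiv.Perm.mul_apply, ih, hρ]
  have hfst : ∀ d d' : G.Dart, d.fst = d'.fst → g d = g d' := by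
    intro d d' h
    obtain ⟨n, rfl⟩ := E.cyclic d d' h
    exact (hpow n d).symm
  suffices ∀ {u v : V} (p : G.Walk u v) (d d' : G.Dart), d.fst = u → d'.fst = v → g d = g d' from
    this (hG.preconnected d.fst d'.fst).some d d' rfl rfl
  intro u v p
  induction p with
  | nil => exact fun d d' h h' => hfst d d' (h.trans h'.symm)
  | @cons u w v hadj p ih =>
    intro d d' h h'
    rw [hfst d ⟨(u, w), hadj⟩ h, ← hsymm]
    exact ih _ d' rfl h'

variable [Fintype V] [DecidableRel G.Adj]

noncomputable instance : Fintype E.Faces := Quotient.fintype _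

noncomputable def faceBoundary : (E.Faces → ZMod 2) →ₗ[ZMod 2] G.edgeSet → ZMod 2 :=
  LinearMap.pi fun e => ∑ d : G.Dart with d.toEdge = e, LinearMap.proj (E.face d)

lemma faceBoundary_toEdge (s : E.Faces → ZMod 2) (d : G.Dart) :
    E.faceBoundary s d.toEdge = s (E.face d) + s (E.face d.symm) := by
  have : ({d' : G.Dart | d'.toEdge = d.toEdge} : Finset G.Dart) = {d, d.symm} := by
    ext d'
    simp [Dart.toEdge_eq_iff]
  simp [faceBoundary, this, Finset.sum_pair d.symm_ne.symm]

lemma edgeBoundary_faceBoundary (s : E.Faces → ZMod 2) :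
    G.edgeBoundary (E.faceBoundary s) = 0 := by
  ext v
  have hρ : ∑ d : G.Dart with d.fst = v, s (E.face (E.ρ d)) =
      ∑ d : G.Dart with d.fst = v, s (E.face d) :=
    Finset.sum_equiv E.ρ (by simp [E.fst_eq]) (fun _ _ => rfl)
  simp only [edgeBoundary_apply, faceBoundary_toEdge, Finset.sum_add_distrib, face_symm, hρ,
    CharTwo.add_self_eq_zero, Pi.zero_apply]

variable {E}

lemma ker_faceBoundary_le (hG : G.Connected) :
    LinearMap.ker E.faceBoundary ≤ Submodule.span (ZMod 2) {1} := by
  intro s hs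
  have hsymm : ∀ d, s (E.face d.symm) = s (E.face d) := fun d =>
    (CharTwo.add_eq_zero.1 ((E.faceBoundary_toEdge s d).symm.trans (congrFun hs _))).symm
  have hconst := eq_of_symm_rotation_invariant hG (g := fun d => s (E.face d)) hsymm
    (fun d => by rw [← face_symm, hsymm])
  rcases isEmpty_or_nonempty G.Dart with hD | ⟨⟨d₀⟩⟩
  · convert Submodule.zero_mem _
    funext f
    induction f using Quotient.ind with
    | _ d => exact isEmptyElim d
  refine Submodule.mem_span_singleton.2 ⟨s (E.face d₀), funext fun f => ?_⟩
  induction f using Quotient.ind with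
  | _ d => exact (mul_one _).trans (hconst d₀ d)

lemma range_faceBoundary_eq_ker (hG : G.Connected) (hpl : E.IsPlanar) :
    LinearMap.range E.faceBoundary = LinearMap.ker G.edgeBoundary := by
  refine Submodule.eq_of_le_of_finrank_le ?_ ?_
  · rintro _ ⟨s, rfl⟩
    exact E.edgeBoundary_faceBoundary s
  have hker₁ := hG.finrank_ker_edgeBoundary_add_le
  have hker₂ := (Submodule.finrank_mono (ker_faceBoundary_le (E := E) hG)).trans
    (finrank_span_le_card ({1} : Set (E.Faces → ZMod 2)))
  have hrank := LinearMap.finrank_range_add_finrank_ker E.faceBoundary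
  have hV : 0 < Fintype.card V := Fintype.card_pos_iff.2 hG.nonempty
  simp only [Module.finrank_fintype_fun_eq_card, Set.toFinset_singleton,
    Finset.card_singleton] at hker₂ hrank
  simp only [IsPlanar, Nat.card_eq_fintype_card] at hpl
  omega

lemma face_symm_ne (hG : G.Connected) (heul : ∀ v, Even (G.degree v)) (hpl : E.IsPlanar)
    (d : G.Dart) : E.face d.symm ≠ E.face d := by
  intro h
  obtain ⟨s, hs⟩ : (1 : G.edgeSet → ZMod 2) ∈ LinearMap.range E.faceBoundary := by
    rw [range_faceBoundary_eq_ker hG hpl]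
    exact edgeBoundary_one heul
  have := congrFun hs d.toEdge
  rw [faceBoundary_toEdge, h, CharTwo.add_self_eq_zero] at this
  exact zero_ne_one this

lemma ncard_faces_of_edge (hG : G.Connected) (heul : ∀ v, Even (G.degree v)) (hpl : E.IsPlanar)
    (e : G.edgeSet) : {f | ∃ d : G.Dart, d.edge = e ∧ E.face d = f}.ncard = 2 := by
  obtain ⟨d, rfl⟩ := Dart.toEdge_surjective e
  have : {f | ∃ d' : G.Dart, d'.edge = d.edge ∧ E.face d' = f} = {E.face d, E.face d.symm} := by
    ext f
    rw [Set.mem_ofPred_eq, exists_dart_edge_eq_and_iff, Set.mem_insert_iff,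
      Set.mem_singleton_iff]
    exact or_congr eq_comm eq_comm
  rw [Dart.coe_toEdge, this, Set.ncard_pair (face_symm_ne hG heul hpl d).symm]

lemma even_ncard_edges_at_of_face (hG : G.Connected) (heul : ∀ v, Even (G.degree v))
    (hpl : E.IsPlanar) (v : V) (f : E.Faces) :
    Even {e : G.edgeSet | v ∈ (e : Sym2 V) ∧ ∃ d : G.Dart, d.edge = e ∧ E.face d = f}.ncard := by
  rw [ncard_edge_mem_and]
  have hsplit : {d : G.Dart | d.fst = v ∧ ∃ d' : G.Dart, d'.edge = d.edge ∧ E.face d' = f} =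
      {d | d.fst = v ∧ E.face d = f} ∪ {d | d.fst = v ∧ E.face d.symm = f} := by
    ext d
    simp [exists_dart_edge_eq_and_iff, and_or_left]
  have hdisj : Disjoint {d : G.Dart | d.fst = v ∧ E.face d = f}
      {d | d.fst = v ∧ E.face d.symm = f} :=
    Set.disjoint_left.2 fun d ⟨_, h⟩ ⟨_, h'⟩ => face_symm_ne hG heul hpl d (h'.trans h.symm)
  have hrot : E.ρ '' {d | d.fst = v ∧ E.face d.symm = f} = {d | d.fst = v ∧ E.face d = f} := by
    ext d
    constructor
    · rintro ⟨d', ⟨hv, hf⟩, rfl⟩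
      exact ⟨(E.fst_eq d').trans hv, (E.face_symm d').symm.trans hf⟩
    · rintro ⟨hv, hf⟩
      refine ⟨E.ρ.symm d, ⟨?_, ?_⟩, E.ρ.apply_symm_apply d⟩
      · rw [← E.fst_eq, E.ρ.apply_symm_apply, hv]
      · rw [face_symm, E.ρ.apply_symm_apply, hf]
  simp only [Dart.coe_toEdge]
  rw [hsplit, Set.ncard_union_eq hdisj, ← hrot, Set.ncard_image_of_injective _ E.ρ.injective]
  exact ⟨_, rfl⟩

lemma nonempty_faces (hG : G.Connected) (hpl : E.IsPlanar) : Nonempty E.Faces := by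
  obtain ⟨r⟩ := hG.nonempty
  have := Fintype.card_le_of_injective _ (hG.bfsTreeEdge_injective r)
  simp only [Fintype.card_subtype_compl, Fintype.card_subtype_eq] at this
  simp only [IsPlanar, Nat.card_eq_fintype_card] at hpl
  exact Fintype.card_pos_iff.1 (by omega)

variable (E) in
def dualGraph (T : Set G.edgeSet) : SimpleGraph E.Faces where
  Adj f g := f ≠ g ∧ ∃ d : G.Dart, d.toEdge ∉ T ∧ E.face d = f ∧ E.face d.symm = g
  symm := by
    constructor
    rintro _ _ ⟨hne, d, hd, rfl, rfl⟩
    exact ⟨hne.symm, d.symm, by simpa using hd, rfl, by simp⟩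
  loopless := ⟨fun _ h => h.1 rfl⟩

/-- The indicator of `S` has boundary supported on the tree, and a cycle on a tree vanishes. -/
lemma eq_univ_of_forall_face_symm_mem (hG : G.Connected) (r : V) {S : Set E.Faces}
    (hS : ∀ d : G.Dart, d.toEdge ∉ Set.range (hG.bfsTreeEdge r) → E.face d ∈ S →
      E.face d.symm ∈ S) {f : E.Faces} (hf : f ∈ S) : S = Set.univ := by
  classical
  let s : E.Faces → ZMod 2 := fun g => if g ∈ S then 1 else 0
  have hiff : ∀ d : G.Dart, d.toEdge ∉ Set.range (hG.bfsTreeEdge r) →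
      (E.face d ∈ S ↔ E.face d.symm ∈ S) := fun d hd =>
    ⟨hS d hd, fun h => by simpa using hS d.symm (by simpa using hd) h⟩
  have hzero : E.faceBoundary s = 0 := by
    refine hG.eq_zero_of_edgeBoundary_eq_zero r (E.edgeBoundary_faceBoundary s) fun e he => ?_
    obtain ⟨d, rfl⟩ := Dart.toEdge_surjective e
    by_contra hd
    rw [faceBoundary_toEdge] at he
    by_cases h : E.face d ∈ S
    · simp [s, h, (hiff d hd).1 h, CharTwo.add_self_eq_zero] at he
    · simp [s, h, mt (hiff d hd).2 h] at he
  obtain ⟨c, hc⟩ := Submodule.mem_span_singleton.1 (ker_faceBoundary_le hG hzero)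
  refine Set.eq_univ_of_forall fun g => ?_
  have hgf : s g = s f := (congrFun hc g).symm.trans (congrFun hc f)
  by_contra hg
  simp [s, hf, hg] at hgf

lemma dualGraph_connected (hG : G.Connected) (heul : ∀ v, Even (G.degree v)) (hpl : E.IsPlanar)
    (r : V) : (E.dualGraph (Set.range (hG.bfsTreeEdge r))).Connected := by
  have := nonempty_faces hG hpl
  refine ⟨fun f g => ?_⟩
  set H := E.dualGraph (Set.range (hG.bfsTreeEdge r))
  have := eq_univ_of_forall_face_symm_mem hG r (S := {g | H.Reachable f g})
    (fun d hd (h : H.Reachable f (E.face d)) =>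
      h.trans (Adj.reachable ⟨(face_symm_ne hG heul hpl d).symm, d, hd, rfl, rfl⟩))
    (Reachable.refl f)
  exact Set.eq_univ_iff_forall.1 this g

lemma exists_dual_spanning_tree (hG : G.Connected) (heul : ∀ v, Even (G.degree v))
    (hpl : E.IsPlanar) (r : V) (f₀ : E.Faces) :
    ∃ (δ : {g // g ≠ f₀} → G.Dart) (ψ : E.Faces → ℕ), ∀ g,
      (δ g).toEdge ∉ Set.range (hG.bfsTreeEdge r) ∧ E.face (δ g) = g ∧
        ψ (E.face (δ g).symm) < ψ g := by
  set H := E.dualGraph (Set.range (hG.bfsTreeEdge r))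
  have hH : H.Connected := dualGraph_connected hG heul hpl r
  choose δ hδ using fun g : {g // g ≠ f₀} => (hH.adj_bfsParent g.2).2
  refine ⟨δ, fun g => H.dist g f₀, fun g => ⟨(hδ g).1, (hδ g).2.1, ?_⟩⟩
  have := hH.dist_bfsParent g.2
  simp only [(hδ g).2.2]
  omega

lemma mem_range_bfsTreeEdge_or_mem_range (hG : G.Connected) (hpl : E.IsPlanar) (r : V)
    {f₀ : E.Faces} {δ : {g // g ≠ f₀} → G.Dart}
    (hδ : ∀ g, (δ g).toEdge ∉ Set.range (hG.bfsTreeEdge r))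
    (hδ_inj : Function.Injective (Dart.toEdge ∘ δ)) (e : G.edgeSet) :
    e ∈ Set.range (hG.bfsTreeEdge r) ∨ e ∈ Set.range (Dart.toEdge ∘ δ) := by
  let ew : {g // g ≠ f₀} → {e // e ∉ Set.range (hG.bfsTreeEdge r)} :=
    fun g => ⟨(δ g).toEdge, hδ g⟩
  have hcard :
      Fintype.card {g // g ≠ f₀} = Fintype.card {e // e ∉ Set.range (hG.bfsTreeEdge r)} := by
    rw [Fintype.card_subtype_compl, Fintype.card_subtype_compl, Fintype.card_subtype_eq,
      Set.card_range_of_injective (hG.bfsTreeEdge_injective r), Fintype.card_subtype_compl,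
      Fintype.card_subtype_eq]
    simp only [IsPlanar, Nat.card_eq_fintype_card] at hpl
    have : 0 < Fintype.card V := Fintype.card_pos_iff.2 ⟨r⟩
    omega
  have hsurj := ((Fintype.bijective_iff_injective_and_card ew).2
    ⟨fun g g' h => hδ_inj (congrArg Subtype.val h), hcard⟩).2
  refine or_iff_not_imp_left.2 fun he => ?_
  obtain ⟨g, hg⟩ := hsurj ⟨e, he⟩
  exact ⟨g, congrArg Subtype.val hg⟩

lemma exists_acyclicMatching (hG : G.Connected) (heul : ∀ v, Even (G.degree v))
    (hpl : E.IsPlanar) :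
    letI := facePosetOrder G E
    ∃ M : Set ((V ⊕ G.edgeSet ⊕ E.Faces) × (V ⊕ G.edgeSet ⊕ E.Faces)),
      IsAcyclicMatching M ∧ ∀ e, ¬ MCritical M (.inr (.inl e)) := by
  obtain ⟨r⟩ := hG.nonempty
  obtain ⟨f₀⟩ := nonempty_faces hG hpl
  obtain ⟨δ, ψ, hδ⟩ := exists_dual_spanning_tree hG heul hpl r f₀
  have hψ : ∀ g g' : {g // g ≠ f₀}, (∃ d : G.Dart, d.edge = (δ g').edge ∧ E.face d = g) →
      g ≠ g' → ψ g < ψ g' := by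
    rintro g g' hd hne
    rcases exists_dart_edge_eq_and_iff.1 hd with h | h
    · exact absurd (Subtype.ext ((hδ g').2.1.symm.trans h)) hne.symm
    · exact h ▸ (hδ g').2.1 ▸ (hδ g').2.2
  have hδ_inj : Function.Injective (Dart.toEdge ∘ δ) := by
    intro g g' h
    by_contra hne
    have h₁ := hψ g g' ⟨δ g, congrArg Subtype.val h, (hδ g).2.1⟩ hne
    have h₂ := hψ g' g ⟨δ g', (congrArg Subtype.val h).symm, (hδ g').2.1⟩ (Ne.symm hne)
    omega
  have hcover := mem_range_bfsTreeEdge_or_mem_range hG hpl r (fun g => (hδ g).1) hδ_inj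
  refine triPartialOrder_exists_acyclicMatching _ _ Subtype.val_injective
    (hG.bfsTreeEdge_injective r) hδ_inj Subtype.val_injective (fun w => Sym2.mem_mk_left _ _)
    (fun g => ⟨δ g, rfl, (hδ g).2.1⟩) (fun w g h => (hδ g).1 ⟨w, h⟩) hcover
    (fun w => G.dist w r) (fun w w' hw hne => ?_) (fun g => ψ g) hψ
  have := hG.dist_bfsParent w.2
  rw [← hG.eq_bfsParent_of_mem_bfsTreeEdge hw (fun h => hne (Subtype.ext h).symm)] at this
  omega

end RotSys

theorem stmt12_general {V : Type u} [Fintype V] (G : SimpleGraph V)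
    [DecidableRel G.Adj] (hconn : G.Connected)
    (heul : ∀ v : V, Even (G.degree v))
    (E : RotSys G) (hpl : E.IsPlanar) :
    letI : PartialOrder (V ⊕ G.edgeSet ⊕ E.Faces) := facePosetOrder G E
    ∃ R : RankStruct (V ⊕ G.edgeSet ⊕ E.Faces),
      R.rk = triRk ∧ SphereLike R 2 ∧
        ∀ v : V, Even {y : V ⊕ G.edgeSet ⊕ E.Faces | Sum.inl v ⋖ y}.ncard := by
  let _ := facePosetOrder G E
  have := RotSys.nonempty_faces hconn hpl
  refine ⟨triRankStruct _ _, rfl,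
    triRankStruct_sphereLike _ _ (RotSys.ncard_faces_of_edge hconn heul hpl)
      (RotSys.even_ncard_edges_at_of_face hconn heul hpl)
      (RotSys.exists_acyclicMatching hconn heul hpl),
    fun v => ?_⟩
  have hcov : {y : V ⊕ G.edgeSet ⊕ E.Faces | .inl v ⋖ y} = _ :=
    triPartialOrder_setOf_inl_covBy _ _ v
  rw [hcov, Set.ncard_image_of_injective _ (Sum.inr_injective.comp Sum.inl_injective),
    SimpleGraph.ncard_edge_mem]
  exact heul v

/-- the face poset of a planar embedding of a connected Eulerian planar
graph (with an edge) is a sphere-like ranked poset of rank 2, and moreover every vertex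
is covered by an even number of edges. -/
theorem stmt12 {V : Type u} [Fintype V] [DecidableEq V] (G : SimpleGraph V)
    [DecidableRel G.Adj] (hconn : G.Connected) (hne : G.edgeSet.Nonempty)
    (heul : ∀ v : V, Even (G.degree v))
    (E : RotSys G) (hpl : E.IsPlanar) :
    letI : PartialOrder (V ⊕ G.edgeSet ⊕ E.Faces) := facePosetOrder G E
    ∃ R : RankStruct (V ⊕ G.edgeSet ⊕ E.Faces),
      R.rk = triRk ∧ SphereLike R 2 ∧
        ∀ v : V, Even {y : V ⊕ G.edgeSet ⊕ E.Faces | Sum.inl v ⋖ y}.ncard :=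
  stmt12_general G hconn heul E hpl
end
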